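/- arXiv:1601.02338 — 7 statements merged into one kernel-verified Lean document; each statement's English description precedes it below -/
import Mathlib

section
/- Let Ω ⊂ ℝⁿ be a bounded domain (nonempty bounded open connected set), f : Ω → ℝⁿ a continuous function whose image f(Ω) is open, and a ∈ Ω a point such that s := liminf_{q → ∂Ω} |f(q) − f(a)| > 0 (i.e., every sequence in Ω converging to a boundary point of Ω has liminf of |f(·) − f(a)| at least s). Then the open ball B(f(a), s) is contained in f(Ω). -/
/-! The image `f '' Ω` is open, and it is also relatively closed in `B(f a, s)`: near a point of
the ball, `f` only takes values at parameters from a compact `K ⊆ Ω` whose image is closed.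
Since the ball is connected and contains `f a`, it lies in `f '' Ω`. -/

open Metric Set

theorem closure_image_inter_ball_subset_image {X Y : Type*} [TopologicalSpace X] [MetricSpace Y]
    {f : X → Y} {Ω : Set X} (hf : ContinuousOn f Ω) {c : Y} {s : ℝ}
    (hlim : ∀ ε > 0, ∃ K : Set X, IsCompact K ∧ K ⊆ Ω ∧ ∀ q ∈ Ω \ K, s - ε ≤ dist (f q) c) :
    closure (f '' Ω) ∩ ball c s ⊆ f '' Ω := by
  rintro y ⟨hy_closure, hy_ball⟩
  set ε := (s - dist y c) / 2 with hε
  have hε_pos : 0 < ε := by rw [mem_ball] at hy_ball; linarith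
  obtain ⟨K, hK_compact, hKΩ, hK⟩ := hlim ε hε_pos
  have h_near : ball y ε ∩ f '' Ω ⊆ f '' K := by
    rintro _ ⟨hqy, q, hqΩ, rfl⟩
    refine ⟨q, by_contra fun hqK => ?_, rfl⟩
    have h_far := hK q ⟨hqΩ, hqK⟩
    have := dist_triangle (f q) y c
    rw [mem_ball] at hqy
    linarith
  have hK_closed : IsClosed (f '' K) := (hK_compact.image_of_continuousOn (hf.mono hKΩ)).isClosed
  have hyK : y ∈ f '' K :=
    hK_closed.closure_subset_iff.mpr h_near <|
      isOpen_ball.inter_closure ⟨mem_ball_self hε_pos, hy_closure⟩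
  exact image_mono hKΩ hyK

theorem stmt_0_general (n : ℕ) (Ω : Set (EuclideanSpace ℝ (Fin n)))
    (f : EuclideanSpace ℝ (Fin n) → EuclideanSpace ℝ (Fin n))
    (hf : ContinuousOn f Ω) (hfo : IsOpen (f '' Ω))
    (a : EuclideanSpace ℝ (Fin n)) (ha : a ∈ Ω) (s : ℝ) (hs : 0 < s)
    (hlim : ∀ ε > 0, ∃ K : Set (EuclideanSpace ℝ (Fin n)),
      IsCompact K ∧ K ⊆ Ω ∧ ∀ q ∈ Ω \ K, s - ε ≤ ‖f q - f a‖) :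
    ball (f a) s ⊆ f '' Ω := by
  simp only [← dist_eq_norm] at hlim
  exact (convex_ball (f a) s).isPreconnected.subset_of_closure_inter_subset hfo
    ⟨f a, mem_ball_self hs, a, ha, rfl⟩ (closure_image_inter_ball_subset_image hf hlim)

theorem stmt_0 (n : ℕ) (Ω : Set (EuclideanSpace ℝ (Fin n)))
    (hΩo : IsOpen Ω) (hΩc : IsConnected Ω) (hΩb : Bornology.IsBounded Ω)
    (f : EuclideanSpace ℝ (Fin n) → EuclideanSpace ℝ (Fin n))
    (hf : ContinuousOn f Ω) (hfo : IsOpen (f '' Ω))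
    (a : EuclideanSpace ℝ (Fin n)) (ha : a ∈ Ω) (s : ℝ) (hs : 0 < s)
    (hlim : ∀ ε > 0, ∃ K : Set (EuclideanSpace ℝ (Fin n)),
      IsCompact K ∧ K ⊆ Ω ∧ ∀ q ∈ Ω \ K, s - ε ≤ ‖f q - f a‖) :
    ball (f a) s ⊆ f '' Ω :=
  stmt_0_general n Ω f hf hfo a ha s hs hlim
end

section
/- Let F be a holomorphic function on the open unit disc 𝔻 ⊂ ℂ with sup_{z ∈ 𝔻} (1 − |z|²)·|F′(z)| ≤ 1 and F′(0) = 1. Then for all z with |z| < 1/√3, Re F′(z) ≥ (1 − √3·|z|)/(1 − |z|/√3)³. -/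
/-!
Rotate so that `z = x ≥ 0` and write `f = F'`, `a = 1 / √3`. Pulling `f` back along the disc
automorphism `ψ_a` exchanging `a` and `0` preserves the Bloch bound and gives `g` with
`g a = 1 / (1 - a²)`. For `a < s < 1`, `q = (1 - s²) g(s ·)` is a holomorphic self-map of the
disc with `q (a / s)` real, so by Schwarz–Pick `q (τ / s)` lies in a pseudo-hyperbolic disc about
a real point, which bounds its real part from below. Letting `s ↓ a` bounds `Re g τ`, and for
`τ = ψ_a x` this is the claimed bound on `Re f x`.
-/

open Metric Complex Set ComplexConjugate

/-- The involutive disc automorphism `ψ_c` exchanging `c` and `0`. -/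
noncomputable def mobius (c u : ℂ) : ℂ := (c - u) / (1 - conj c * u)

section Mobius

variable {c u : ℂ}

theorem one_sub_conj_mul_ne_zero (hc : ‖c‖ < 1) (hu : ‖u‖ ≤ 1) : 1 - conj c * u ≠ 0 := by
  intro h
  have h1 : ‖conj c * u‖ = 1 := by rw [← sub_eq_zero.mp h, norm_one]
  rw [norm_mul, RCLike.norm_conj] at h1
  nlinarith [norm_nonneg c, norm_nonneg u]

theorem norm_one_sub_conj_mul_sq_sub_norm_sub_sq (c u : ℂ) :
    ‖1 - conj c * u‖ ^ 2 - ‖c - u‖ ^ 2 = (1 - ‖c‖ ^ 2) * (1 - ‖u‖ ^ 2) := by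
  simp only [Complex.sq_norm, normSq_apply, sub_re, sub_im, mul_re, mul_im, conj_re, conj_im,
    one_re, one_im]
  ring

theorem one_sub_norm_mobius_sq (h : 1 - conj c * u ≠ 0) :
    1 - ‖mobius c u‖ ^ 2 = (1 - ‖c‖ ^ 2) * (1 - ‖u‖ ^ 2) / ‖1 - conj c * u‖ ^ 2 := by
  rw [mobius, norm_div, div_pow, ← norm_one_sub_conj_mul_sq_sub_norm_sub_sq, sub_div,
    div_self (pow_ne_zero 2 (norm_ne_zero_iff.mpr h))]

theorem norm_mobius_lt_one (hc : ‖c‖ < 1) (hu : ‖u‖ < 1) : ‖mobius c u‖ < 1 := by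
  have hden := one_sub_conj_mul_ne_zero hc hu.le
  have hc2 : 0 < 1 - ‖c‖ ^ 2 := by nlinarith [norm_nonneg c]
  have hu2 : 0 < 1 - ‖u‖ ^ 2 := by nlinarith [norm_nonneg u]
  have h : 0 < 1 - ‖mobius c u‖ ^ 2 := one_sub_norm_mobius_sq hden ▸ by positivity
  nlinarith [norm_nonneg (mobius c u)]

@[simp] theorem mobius_self (c : ℂ) : mobius c c = 0 := by simp [mobius]

@[simp] theorem mobius_zero (c : ℂ) : mobius c 0 = c := by simp [mobius]

theorem mobius_ofReal (a t : ℝ) : mobius a t = ((a - t) / (1 - a * t) : ℝ) := by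
  simp only [mobius, conj_ofReal]
  push_cast
  rfl

theorem mobius_mobius (hc : ‖c‖ < 1) (hu : ‖u‖ ≤ 1) : mobius c (mobius c u) = u := by
  have hden := one_sub_conj_mul_ne_zero hc hu
  have hc' : (1 : ℂ) - conj c * c ≠ 0 := one_sub_conj_mul_ne_zero hc hc.le
  have hnum : c - mobius c u = u * (1 - conj c * c) / (1 - conj c * u) := by
    rw [eq_div_iff hden, mobius, sub_mul, div_mul_cancel₀ _ hden]; ring
  have hden' : 1 - conj c * mobius c u = (1 - conj c * c) / (1 - conj c * u) := by
    rw [eq_div_iff hden, mobius, sub_mul, mul_assoc, div_mul_cancel₀ _ hden]; ring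
  rw [mobius, hnum, hden', div_div_div_cancel_right₀ hden, mul_div_cancel_right₀ _ hc']

theorem mapsTo_mobius (hc : ‖c‖ < 1) : MapsTo (mobius c) (ball 0 1) (ball 0 1) := fun _ hu ↦
  mem_ball_zero_iff.mpr (norm_mobius_lt_one hc (mem_ball_zero_iff.mp hu))

theorem differentiableOn_mobius (hc : ‖c‖ < 1) : DifferentiableOn ℂ (mobius c) (ball 0 1) :=
  fun _ hu ↦ DifferentiableWithinAt.div (by fun_prop) (by fun_prop)
    (one_sub_conj_mul_ne_zero hc (mem_ball_zero_iff.mp hu).le)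

end Mobius

theorem norm_mobius_le_norm_mobius_of_mapsTo_ball {q : ℂ → ℂ}
    (hq : DifferentiableOn ℂ q (ball 0 1)) (hmaps : MapsTo q (ball 0 1) (ball 0 1)) {z w : ℂ}
    (hz : ‖z‖ < 1) (hw : ‖w‖ < 1) : ‖mobius (q w) (q z)‖ ≤ ‖mobius w z‖ := by
  have hqw : ‖q w‖ < 1 := mem_ball_zero_iff.mp (hmaps (mem_ball_zero_iff.mpr hw))
  -- Schwarz's lemma for the self-map `ψ_{q w} ∘ q ∘ ψ_w` of the disc, which fixes `0`.
  have hQ := (differentiableOn_mobius hqw).comp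
    (hq.comp (differentiableOn_mobius hw) (mapsTo_mobius hw)) (hmaps.comp (mapsTo_mobius hw))
  have hQmaps := (mapsTo_mobius hqw).comp (hmaps.comp (mapsTo_mobius hw))
  have := norm_le_norm_of_mapsTo_ball hQ (hQmaps.mono_right ball_subset_closedBall)
    (by simp) (norm_mobius_lt_one hw hz)
  simpa [mobius_mobius hw hz.le] using this

theorem div_le_re_of_norm_mobius_le {v ρ : ℝ} {u : ℂ} (hv : |v| < 1) (hρ0 : 0 ≤ ρ) (hρ1 : ρ < 1)
    (hu : ‖u‖ < 1) (h : ‖mobius v u‖ ≤ ρ) : (v - ρ) / (1 - v * ρ) ≤ u.re := by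
  have hv' : ‖(v : ℂ)‖ < 1 := by rwa [norm_real, Real.norm_eq_abs]
  have hden := one_sub_conj_mul_ne_zero hv' hu.le
  rw [mobius, norm_div, div_le_iff₀ (norm_pos_iff.mpr hden)] at h
  have hsq : ‖(v : ℂ) - u‖ ^ 2 ≤ ρ ^ 2 * ‖1 - conj (v : ℂ) * u‖ ^ 2 := by
    rw [← mul_pow]; exact pow_le_pow_left₀ (norm_nonneg _) h 2
  simp only [Complex.sq_norm, normSq_apply, sub_re, sub_im, mul_re, mul_im, conj_ofReal,
    ofReal_re, ofReal_im, one_re, one_im] at hsq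
  have hx : |u.re| < 1 := (abs_re_le_norm u).trans_lt hu
  have hvx : 0 < 1 - v * u.re := by
    have : |v * u.re| < 1 := by
      rw [abs_mul]; exact mul_lt_one_of_nonneg_of_lt_one_left (abs_nonneg v) hv hx.le
    linarith [le_abs_self (v * u.re)]
  have hvρ : 0 < 1 - v * ρ := by nlinarith [le_abs_self v, abs_nonneg v]
  -- the imaginary part only helps, since `(ρ v)² ≤ 1`
  have hρv : ρ ^ 2 * v ^ 2 ≤ 1 :=
    mul_le_one₀ (by nlinarith) (sq_nonneg v) (by rw [← sq_abs]; nlinarith [abs_nonneg v])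
  have hre : (v - u.re) ^ 2 ≤ (ρ * (1 - v * u.re)) ^ 2 := by
    nlinarith [mul_nonneg (sub_nonneg.mpr hρv) (sq_nonneg u.im)]
  have := le_of_sq_le_sq hre (by positivity)
  rw [div_le_iff₀ hvρ]
  linarith

theorem div_le_re_of_mapsTo_ball {q : ℂ → ℂ} (hq : DifferentiableOn ℂ q (ball 0 1))
    (hmaps : MapsTo q (ball 0 1) (ball 0 1)) {z w : ℂ} (hz : ‖z‖ < 1) (hw : ‖w‖ < 1) {v : ℝ}
    (hqw : q w = v) : (v - ‖mobius w z‖) / (1 - v * ‖mobius w z‖) ≤ (q z).re := by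
  have hv : ‖(v : ℂ)‖ < 1 := hqw ▸ mem_ball_zero_iff.mp (hmaps (mem_ball_zero_iff.mpr hw))
  rw [norm_real, Real.norm_eq_abs] at hv
  have hSP := norm_mobius_le_norm_mobius_of_mapsTo_ball hq hmaps hz hw
  rw [hqw] at hSP
  exact div_le_re_of_norm_mobius_le hv (norm_nonneg _) (norm_mobius_lt_one hw hz)
    (mem_ball_zero_iff.mp (hmaps (mem_ball_zero_iff.mpr hz))) hSP

/-- For `f = F'` this says that the Bloch seminorm of `F` is at most `1`. -/
def BlochUnitBound (f : ℂ → ℂ) : Prop := ∀ z ∈ ball (0 : ℂ) 1, (1 - ‖z‖ ^ 2) * ‖f z‖ ≤ 1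

/-- For `f = F'` this is `-(F ∘ ψ_c)'`. -/
noncomputable def mobiusPullback (c : ℂ) (f : ℂ → ℂ) (z : ℂ) : ℂ :=
  f (mobius c z) * ((1 - ‖c‖ ^ 2 : ℝ) / (1 - conj c * z) ^ 2)

section Pullback

variable {c : ℂ} {f : ℂ → ℂ}

theorem mobiusPullback_self (hc : ‖c‖ < 1) :
    mobiusPullback c f c = f 0 * ((1 - ‖c‖ ^ 2)⁻¹ : ℝ) := by
  have hc2 : (1 : ℝ) - ‖c‖ ^ 2 ≠ 0 := by nlinarith [norm_nonneg c]
  rw [mobiusPullback, mobius_self, conj_mul']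
  push_cast
  field_simp

theorem re_mobiusPullback_ofReal (a t : ℝ) : (mobiusPullback a f t).re =
    (f (mobius a t)).re * ((1 - a ^ 2) / (1 - a * t) ^ 2) := by
  rw [mobiusPullback, norm_real, Real.norm_eq_abs, sq_abs, conj_ofReal]
  norm_cast
  exact re_mul_ofReal _ _

theorem DifferentiableOn.mobiusPullback (hf : DifferentiableOn ℂ f (ball 0 1)) (hc : ‖c‖ < 1) :
    DifferentiableOn ℂ (mobiusPullback c f) (ball 0 1) :=
  (hf.comp (differentiableOn_mobius hc) (mapsTo_mobius hc)).mul fun _ hz ↦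
    (differentiableWithinAt_const _).div (by fun_prop)
      (pow_ne_zero 2 (one_sub_conj_mul_ne_zero hc (mem_ball_zero_iff.mp hz).le))

namespace BlochUnitBound

theorem mobiusPullback (hf : BlochUnitBound f) (hc : ‖c‖ < 1) :
    BlochUnitBound (mobiusPullback c f) := by
  intro z hz
  have hden := one_sub_conj_mul_ne_zero hc (mem_ball_zero_iff.mp hz).le
  have hc2 : 0 ≤ 1 - ‖c‖ ^ 2 := by nlinarith [norm_nonneg c]
  have h := hf _ (mapsTo_mobius hc hz)
  rw [one_sub_norm_mobius_sq hden] at h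
  calc (1 - ‖z‖ ^ 2) * ‖_root_.mobiusPullback c f z‖
      = (1 - ‖c‖ ^ 2) * (1 - ‖z‖ ^ 2) / ‖1 - conj c * z‖ ^ 2 * ‖f (mobius c z)‖ := by
        rw [_root_.mobiusPullback, norm_mul, norm_div, norm_pow, norm_real,
          Real.norm_of_nonneg hc2]
        ring
    _ ≤ 1 := h

theorem comp_mul (hf : BlochUnitBound f) {e : ℂ} (he : ‖e‖ = 1) :
    BlochUnitBound fun z ↦ f (e * z) := by
  intro z hz
  have hez : ‖e * z‖ = ‖z‖ := by rw [norm_mul, he, one_mul]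
  simpa only [hez] using hf (e * z) (by rwa [mem_ball_zero_iff, hez, ← mem_ball_zero_iff])

theorem mapsTo_rescale (hf : BlochUnitBound f) {s : ℝ} (hs0 : 0 < s) (hs1 : s < 1) :
    MapsTo (fun z ↦ ((1 - s ^ 2 : ℝ) : ℂ) * f (s * z)) (ball 0 1) (ball 0 1) := by
  intro z hz
  rw [mem_ball_zero_iff] at hz ⊢
  have hsz : ‖(s : ℂ) * z‖ = s * ‖z‖ := by rw [norm_mul, norm_real, Real.norm_of_nonneg hs0.le]
  have h := hf _ (mem_ball_zero_iff.mpr (by rw [hsz]; nlinarith [norm_nonneg z]))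
  rw [hsz] at h
  rw [norm_mul, norm_real, Real.norm_of_nonneg (by nlinarith)]
  rcases (norm_nonneg (f (s * z))).eq_or_lt with h0 | hpos
  · rw [← h0]; norm_num
  · have : 0 < s ^ 2 * (1 - ‖z‖ ^ 2) * ‖f (s * z)‖ :=
      mul_pos (mul_pos (by positivity) (by nlinarith [norm_nonneg z])) hpos
    nlinarith

variable {g : ℂ → ℂ} {a τ : ℝ}

theorem div_le_re_of_lt (hgb : BlochUnitBound g) (hg : DifferentiableOn ℂ g (ball 0 1))
    (ha0 : 0 < a) (hτ0 : 0 ≤ τ) (hτa : τ ≤ a) (hga : g a = ((1 - a ^ 2)⁻¹ : ℝ)) {s : ℝ}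
    (has : a < s) (hs1 : s < 1) :
    let v := (1 - s ^ 2) / (1 - a ^ 2)
    let ρ := s * (a - τ) / (s ^ 2 - a * τ)
    (v - ρ) / (1 - v * ρ) ≤ (1 - s ^ 2) * (g τ).re := by
  intro v ρ
  have hs0 : 0 < s := ha0.trans has
  have hsaτ : 0 < s ^ 2 - a * τ := by nlinarith
  -- Schwarz–Pick for `q = (1 - s²) g(s ·)` between `a / s`, where `q` takes the value `v`, and
  -- `τ / s`, at pseudo-hyperbolic distance `ρ`.
  set q : ℂ → ℂ := fun z ↦ ((1 - s ^ 2 : ℝ) : ℂ) * g (s * z)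
  have hscale : MapsTo (fun z : ℂ ↦ (s : ℂ) * z) (ball 0 1) (ball 0 1) := fun z hz ↦ by
    rw [mem_ball_zero_iff, norm_mul, norm_real, Real.norm_of_nonneg hs0.le]
    nlinarith [norm_nonneg z, mem_ball_zero_iff.mp hz]
  have hq : DifferentiableOn ℂ q (ball 0 1) :=
    (hg.comp (differentiableOn_id.const_mul _) hscale).const_mul _
  have hqa : q (a / s : ℝ) = v := by
    simp only [q, v, ← ofReal_mul, mul_div_cancel₀ a hs0.ne', hga]
    push_cast
    field_simp
  have hmob : ‖mobius (a / s : ℝ) (τ / s : ℝ)‖ = ρ := by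
    have hreal : (a / s - τ / s) / (1 - a / s * (τ / s)) = ρ := by
      have := hsaτ.ne'
      simp only [ρ]
      field_simp
    have hρ0 : 0 ≤ ρ := div_nonneg (mul_nonneg hs0.le (sub_nonneg.mpr hτa)) hsaτ.le
    rw [mobius_ofReal, hreal, norm_real, Real.norm_of_nonneg hρ0]
  have hnorm : ∀ t : ℝ, 0 ≤ t → t < s → ‖((t / s : ℝ) : ℂ)‖ < 1 := fun t ht hts ↦ by
    rwa [norm_real, Real.norm_of_nonneg (by positivity), div_lt_one hs0]
  have h := div_le_re_of_mapsTo_ball hq (hgb.mapsTo_rescale hs0 hs1)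
    (hnorm τ hτ0 (hτa.trans_lt has)) (hnorm a ha0.le has) hqa
  rwa [hmob, show (q (τ / s : ℝ)).re = (1 - s ^ 2) * (g τ).re by
    simp only [q, ← ofReal_mul, mul_div_cancel₀ τ hs0.ne', re_ofReal_mul]] at h

theorem re_lower_bound_of_lt (hgb : BlochUnitBound g) (hg : DifferentiableOn ℂ g (ball 0 1))
    (ha0 : 0 < a) (hτ0 : 0 ≤ τ) (hτa : τ ≤ a) (hga : g a = ((1 - a ^ 2)⁻¹ : ℝ)) {s : ℝ}
    (has : a < s) (hs1 : s < 1) :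
    -s ^ 3 - a * s ^ 2 + (1 + a * τ - a ^ 2) * s + τ ≤
      (1 - s ^ 2) * ((a - τ) * s ^ 2 + (1 - a * τ) * s + τ * (1 - a ^ 2)) * (g τ).re := by
  have h := hgb.div_le_re_of_lt hg ha0 hτ0 hτa hga has hs1
  set v : ℝ := (1 - s ^ 2) / (1 - a ^ 2)
  set ρ : ℝ := s * (a - τ) / (s ^ 2 - a * τ)
  have hs0 : 0 < s := ha0.trans has
  have ha2 : 0 < 1 - a ^ 2 := by nlinarith
  have hsaτ : 0 < s ^ 2 - a * τ := by nlinarith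
  have hvρ : 0 < 1 - v * ρ := by
    have hv : v < 1 := by rw [div_lt_one ha2]; nlinarith
    have hρ : ρ < 1 := by rw [div_lt_one hsaτ]; nlinarith
    have : 0 ≤ v := div_nonneg (by nlinarith) ha2.le
    nlinarith
  rw [div_le_iff₀ hvρ] at h
  -- Both sides of `h` vanish at `s = a`; the factor `s - a` is divided out.
  have hfactor :
      ((1 - s ^ 2) * (g τ).re * (1 - v * ρ) - (v - ρ)) * ((1 - a ^ 2) * (s ^ 2 - a * τ)) =
        (s - a) * ((1 - s ^ 2) * ((a - τ) * s ^ 2 + (1 - a * τ) * s + τ * (1 - a ^ 2)) * (g τ).re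
        - (-s ^ 3 - a * s ^ 2 + (1 + a * τ - a ^ 2) * s + τ)) := by
    simp only [v, ρ]
    field_simp
    ring
  have hprod := hfactor ▸ mul_nonneg (sub_nonneg.mpr h) (by positivity)
  linarith [nonneg_of_mul_nonneg_right hprod (sub_pos.mpr has)]

theorem re_lower_bound (hgb : BlochUnitBound g) (hg : DifferentiableOn ℂ g (ball 0 1))
    (ha0 : 0 < a) (ha1 : a < 1) (hτ0 : 0 ≤ τ) (hτa : τ ≤ a)
    (hga : g a = ((1 - a ^ 2)⁻¹ : ℝ)) :
    a - 3 * a ^ 3 + τ * (1 + a ^ 2) ≤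
      (1 - a ^ 2) * (a ^ 3 + a + τ * (1 - 3 * a ^ 2)) * (g τ).re := by
  have h := ContinuousWithinAt.closure_le (s := Ioo a 1) (x := a)
    (by rw [closure_Ioo ha1.ne]; exact left_mem_Icc.mpr ha1.le)
    (by fun_prop : Continuous fun s ↦
      -s ^ 3 - a * s ^ 2 + (1 + a * τ - a ^ 2) * s + τ).continuousWithinAt
    (by fun_prop : Continuous fun s ↦ (1 - s ^ 2) *
      ((a - τ) * s ^ 2 + (1 - a * τ) * s + τ * (1 - a ^ 2)) * (g τ).re).continuousWithinAt
    fun s hs ↦ hgb.re_lower_bound_of_lt hg ha0 hτ0 hτa hga hs.1 hs.2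
  linear_combination h

end BlochUnitBound

theorem one_sub_sqrt_three_mul_div_le_re (hf : DifferentiableOn ℂ f (ball 0 1))
    (hb : BlochUnitBound f) (h0 : f 0 = 1) {x : ℝ} (hx0 : 0 ≤ x) (hx : x < 1 / √3) :
    (1 - √3 * x) / (1 - x / √3) ^ 3 ≤ (f x).re := by
  set a : ℝ := 1 / √3 with ha_def
  have ha0 : 0 < a := by positivity
  have ha2 : a ^ 2 = 1 / 3 := by rw [ha_def, div_pow, Real.sq_sqrt (by norm_num)]; norm_num
  have hax : 0 < 1 - a * x := by nlinarith
  rw [show √3 = 1 / a by rw [ha_def, one_div_one_div],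
    show (1 - 1 / a * x) / (1 - x / (1 / a)) ^ 3 = (a - x) / (a * (1 - a * x) ^ 3) by field_simp,
    div_le_iff₀ (by positivity)]
  clear_value a
  have ha' : ‖(a : ℂ)‖ < 1 := by rw [norm_real, Real.norm_of_nonneg ha0.le]; nlinarith
  obtain ⟨τ, hτx⟩ : ∃ τ : ℝ, τ * (1 - a * x) = a - x := ⟨_, div_mul_cancel₀ _ hax.ne'⟩
  have hτ1 : (1 - a * τ) * (1 - a * x) = 2 / 3 := by linear_combination -a * hτx - ha2
  have haτ : 1 - a * τ ≠ 0 := left_ne_zero_of_mul (by rw [hτ1]; norm_num)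
  have hmob : mobius a τ = x := by
    rw [mobius_ofReal, div_eq_of_eq_mul haτ (mul_right_cancel₀ hax.ne' ?_)]
    linear_combination -hτx - x * hτ1 - x * ha2
  have hga : mobiusPullback a f a = ((1 - a ^ 2)⁻¹ : ℝ) := by
    rw [mobiusPullback_self ha', h0, norm_real, Real.norm_of_nonneg ha0.le, one_mul]
  have hest := (hb.mobiusPullback ha').re_lower_bound (hf.mobiusPullback ha') ha0 (by nlinarith)
    (by nlinarith) (by nlinarith) hga
  -- `a² = 1 / 3` makes the terms `τ (1 - 3 a²)` vanish.
  have e1 : a - 3 * a ^ 3 + τ * (1 + a ^ 2) = 4 / 3 * τ := by linear_combination (τ - 3 * a) * ha2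
  have e2 : (1 - a ^ 2) * (a ^ 3 + a + τ * (1 - 3 * a ^ 2)) = 8 / 9 * a := by
    linear_combination (-(a * (a ^ 2 + 1 / 3)) - 3 * τ * (1 - a ^ 2)) * ha2
  have e3 : (1 - a ^ 2) / (1 - a * τ) ^ 2 = 3 / 2 * (1 - a * x) ^ 2 := by
    rw [div_eq_iff (pow_ne_zero 2 haτ)]
    linear_combination -ha2 - 3 / 2 * ((1 - a * τ) * (1 - a * x) + 2 / 3) * hτ1
  rw [re_mobiusPullback_ofReal, hmob, e1, e2, e3] at hest
  nlinarith [mul_le_mul_of_nonneg_right hest hax.le]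

end Pullback

theorem stmt_2 (F : ℂ → ℂ) (hF : DifferentiableOn ℂ F (ball 0 1))
    (hB : ∀ z ∈ ball (0 : ℂ) 1, (1 - ‖z‖ ^ 2) * ‖deriv F z‖ ≤ 1)
    (hd : deriv F 0 = 1) :
    ∀ z : ℂ, ‖z‖ < 1 / Real.sqrt 3 →
      (1 - Real.sqrt 3 * ‖z‖) / (1 - ‖z‖ / Real.sqrt 3) ^ 3 ≤ (deriv F z).re := by
  intro z hz
  have hf : DifferentiableOn ℂ (deriv F) (ball 0 1) :=
    (hF.analyticOnNhd isOpen_ball).deriv.differentiableOn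
  set e := exp (arg z * I)
  have he : ‖e‖ = 1 := norm_exp_ofReal_mul_I _
  have hez : e * ‖z‖ = z := by rw [mul_comm]; exact norm_mul_exp_arg_mul_I z
  have hrot : MapsTo (fun w ↦ e * w) (ball 0 1) (ball 0 1) := fun w hw ↦ by
    rwa [mem_ball_zero_iff, norm_mul, he, one_mul, ← mem_ball_zero_iff]
  have := one_sub_sqrt_three_mul_div_le_re (hf.comp (differentiableOn_id.const_mul e) hrot)
    (BlochUnitBound.comp_mul hB he) (by simpa using hd) (norm_nonneg z) hz
  simpa only [Function.comp_apply, hez] using this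
end

section
/- Let F : 𝔻 → 𝔻 be holomorphic with F(0) = 0 and F′(0) = α ∈ (0, 1]. If z₁, z₂ ∈ 𝔻 are two distinct points with F(z₁) = F(z₂) = w₀, then |w₀| ≤ max(|z₁|, |z₂|)². -/
/-!
Write `φ_a(w) = (w - a) / (1 - conj a * w)` (`blaschkeFactor a`). Then `g = φ_{w₀} ∘ F` is a
self-map of the disc with `g 0 = -w₀` and zeros at `z₁ ≠ z₂`, so it suffices that a self-map
with two distinct zeros `a, b` satisfies `‖g 0‖ ≤ ‖a‖ * ‖b‖`. Moving `a` to the origin and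
dividing by the variable (Schwarz) leaves a self-map vanishing at `φ_a b`; the Schwarz lemma
for that map, evaluated at `φ_a 0`, gives the factor `‖φ_{φ_a b}(φ_a 0)‖ = ‖φ_b 0‖ = ‖b‖`
by Möbius invariance of the pseudo-hyperbolic distance.
-/

open Metric Set ComplexConjugate

noncomputable def blaschkeFactor (a z : ℂ) : ℂ := (z - a) / (1 - conj a * z)

section BlaschkeFactor

variable {a z w : ℂ}

lemma one_sub_conj_mul_ne_zero_s9 (ha : ‖a‖ < 1) (hz : ‖z‖ < 1) : 1 - conj a * z ≠ 0 := by
  have : ‖conj a * z‖ < 1 := by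
    rw [norm_mul, RCLike.norm_conj]
    exact mul_lt_one_of_nonneg_of_lt_one_left (norm_nonneg a) ha hz.le
  intro h
  rw [← eq_of_sub_eq_zero h, norm_one] at this
  exact lt_irrefl _ this

lemma normSq_one_sub_conj_mul_sub_normSq_sub (a z : ℂ) :
    Complex.normSq (1 - conj a * z) - Complex.normSq (z - a)
      = (1 - Complex.normSq a) * (1 - Complex.normSq z) := by
  simp only [Complex.normSq_apply, Complex.sub_re, Complex.sub_im, Complex.one_re,
    Complex.one_im, Complex.mul_re, Complex.mul_im, Complex.conj_re, Complex.conj_im]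
  ring

lemma norm_blaschkeFactor_lt_one (ha : ‖a‖ < 1) (hz : ‖z‖ < 1) : ‖blaschkeFactor a z‖ < 1 := by
  rw [blaschkeFactor, norm_div, div_lt_one (norm_pos_iff.mpr (one_sub_conj_mul_ne_zero_s9 ha hz))]
  have hsq : Complex.normSq (z - a) < Complex.normSq (1 - conj a * z) := by
    have := normSq_one_sub_conj_mul_sub_normSq_sub a z
    rw [Complex.normSq_eq_norm_sq a, Complex.normSq_eq_norm_sq z] at this
    have hpos : 0 < (1 - ‖a‖ ^ 2) * (1 - ‖z‖ ^ 2) := by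
      apply mul_pos <;> nlinarith [norm_nonneg a, norm_nonneg z]
    linarith
  rw [Complex.normSq_eq_norm_sq, Complex.normSq_eq_norm_sq] at hsq
  exact lt_of_pow_lt_pow_left₀ 2 (norm_nonneg _) hsq

lemma mapsTo_blaschkeFactor (ha : ‖a‖ < 1) :
    MapsTo (blaschkeFactor a) (ball 0 1) (ball 0 1) := fun _ hz =>
  mem_ball_zero_iff.mpr (norm_blaschkeFactor_lt_one ha (mem_ball_zero_iff.mp hz))

lemma differentiableOn_blaschkeFactor (ha : ‖a‖ < 1) :
    DifferentiableOn ℂ (blaschkeFactor a) (ball 0 1) :=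
  (differentiable_id.sub_const a).differentiableOn.div
    ((differentiable_const _).sub ((differentiable_const _).mul differentiable_id)).differentiableOn
    fun _ hz => one_sub_conj_mul_ne_zero_s9 ha (mem_ball_zero_iff.mp hz)

@[simp]
lemma blaschkeFactor_self (a : ℂ) : blaschkeFactor a a = 0 := by simp [blaschkeFactor]

@[simp]
lemma blaschkeFactor_zero (a : ℂ) : blaschkeFactor a 0 = -a := by simp [blaschkeFactor]

lemma blaschkeFactor_ne_zero (ha : ‖a‖ < 1) (hz : ‖z‖ < 1) (hne : a ≠ z) :
    blaschkeFactor a z ≠ 0 :=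
  div_ne_zero (sub_ne_zero.mpr hne.symm) (one_sub_conj_mul_ne_zero_s9 ha hz)

lemma blaschkeFactor_mul_one_sub (ha : ‖a‖ < 1) (hz : ‖z‖ < 1) :
    blaschkeFactor a z * (1 - conj a * z) = z - a :=
  div_mul_cancel₀ _ (one_sub_conj_mul_ne_zero_s9 ha hz)

lemma blaschkeFactor_neg_blaschkeFactor (ha : ‖a‖ < 1) (hz : ‖z‖ < 1) :
    blaschkeFactor (-a) (blaschkeFactor a z) = z := by
  have hden := one_sub_conj_mul_ne_zero_s9 (a := -a) (by rwa [norm_neg])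
    (norm_blaschkeFactor_lt_one ha hz)
  rw [blaschkeFactor, div_eq_iff hden, map_neg]
  linear_combination blaschkeFactor_mul_one_sub ha hz

lemma norm_blaschkeFactor_blaschkeFactor (ha : ‖a‖ < 1) (hz : ‖z‖ < 1) (hw : ‖w‖ < 1) :
    ‖blaschkeFactor (blaschkeFactor a z) (blaschkeFactor a w)‖ = ‖blaschkeFactor z w‖ := by
  set u := blaschkeFactor a z
  set v := blaschkeFactor a w
  have hu : u * (1 - conj a * z) = z - a := blaschkeFactor_mul_one_sub ha hz
  have hv : v * (1 - conj a * w) = w - a := blaschkeFactor_mul_one_sub ha hw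
  have hu' : conj u * (1 - a * conj z) = conj z - conj a := by
    simpa using congrArg conj hu
  have h₁ := one_sub_conj_mul_ne_zero_s9 ha hz
  have key :
      blaschkeFactor u v = blaschkeFactor z w * (conj (1 - conj a * z) / (1 - conj a * z)) := by
    rw [blaschkeFactor, blaschkeFactor, div_mul_div_comm,
      div_eq_div_iff (one_sub_conj_mul_ne_zero_s9 (norm_blaschkeFactor_lt_one ha hz)
        (norm_blaschkeFactor_lt_one ha hw)) (mul_ne_zero (one_sub_conj_mul_ne_zero_s9 hz hw) h₁)]
    simp only [map_sub, map_one, map_mul, Complex.conj_conj]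
    linear_combination (1 - z * conj z) * hv - (1 - conj z * w) * hu + (w - z) * v * hu'
  rw [key, norm_mul, norm_div, RCLike.norm_conj, div_self (norm_ne_zero_iff.mpr h₁), mul_one]

end BlaschkeFactor

section Schwarz

variable {f : ℂ → ℂ}

lemma norm_le_norm_blaschkeFactor_of_mapsTo_ball (hd : DifferentiableOn ℂ f (ball 0 1))
    (hm : MapsTo f (ball 0 1) (closedBall 0 1)) {a z : ℂ} (ha : ‖a‖ < 1) (hfa : f a = 0)
    (hz : ‖z‖ < 1) : ‖f z‖ ≤ ‖blaschkeFactor a z‖ := by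
  have ha' : ‖-a‖ < 1 := by rwa [norm_neg]
  have h := Complex.norm_le_norm_of_mapsTo_ball
    (hd.comp (differentiableOn_blaschkeFactor ha') (mapsTo_blaschkeFactor ha'))
    (hm.comp (mapsTo_blaschkeFactor ha')) (by simpa using hfa) (norm_blaschkeFactor_lt_one ha hz)
  rwa [Function.comp_apply, blaschkeFactor_neg_blaschkeFactor ha hz] at h

lemma norm_apply_zero_le_mul_of_mapsTo_ball (hd : DifferentiableOn ℂ f (ball 0 1))
    (hm : MapsTo f (ball 0 1) (closedBall 0 1)) {a b : ℂ} (ha : ‖a‖ < 1) (hb : ‖b‖ < 1)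
    (hab : a ≠ b) (hfa : f a = 0) (hfb : f b = 0) : ‖f 0‖ ≤ ‖a‖ * ‖b‖ := by
  have ha' : ‖-a‖ < 1 := by rwa [norm_neg]
  set H := f ∘ blaschkeFactor (-a)
  have hH0 : H 0 = 0 := by simpa [H] using hfa
  have hHd : DifferentiableOn ℂ H (ball 0 1) :=
    hd.comp (differentiableOn_blaschkeFactor ha') (mapsTo_blaschkeFactor ha')
  have hHm : MapsTo H (ball 0 1) (closedBall (H 0) 1) := by
    rw [hH0]; exact hm.comp (mapsTo_blaschkeFactor ha')
  set K := dslope H 0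
  have hKd : DifferentiableOn ℂ K (ball 0 1) :=
    (Complex.differentiableOn_dslope (ball_mem_nhds _ one_pos)).mpr hHd
  have hKm : MapsTo K (ball 0 1) (closedBall 0 1) := fun z hz =>
    mem_closedBall_zero_iff.mpr
      (by simpa using Complex.norm_dslope_le_div_of_mapsTo_ball hHd hHm hz)
  set c := blaschkeFactor a b
  have hKc : K c = 0 := by
    have hHc : H c = 0 := by simp [H, c, blaschkeFactor_neg_blaschkeFactor ha hb, hfb]
    have h := sub_smul_dslope H 0 c
    rw [sub_zero, hH0, hHc, sub_zero, smul_eq_mul, mul_eq_zero] at h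
    exact h.resolve_left (blaschkeFactor_ne_zero ha hb hab)
  have hKa : ‖K (-a)‖ ≤ ‖b‖ := calc
    ‖K (-a)‖ ≤ ‖blaschkeFactor c (-a)‖ :=
      norm_le_norm_blaschkeFactor_of_mapsTo_ball hKd hKm (norm_blaschkeFactor_lt_one ha hb) hKc ha'
    _ = ‖b‖ := by
      rw [← blaschkeFactor_zero a, norm_blaschkeFactor_blaschkeFactor ha hb (by simp),
        blaschkeFactor_zero, norm_neg]
  have hf0 : f 0 = -a * K (-a) := by
    simpa [H, hfa] using (sub_smul_dslope H 0 (-a)).symm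
  calc ‖f 0‖ = ‖a‖ * ‖K (-a)‖ := by rw [hf0, norm_mul, norm_neg]
    _ ≤ ‖a‖ * ‖b‖ := by gcongr

end Schwarz

theorem stmt_9_general (F : ℂ → ℂ) (hF : DifferentiableOn ℂ F (ball 0 1))
    (hmaps : MapsTo F (ball (0 : ℂ) 1) (ball (0 : ℂ) 1))
    (h0 : F 0 = 0)
    (z₁ z₂ : ℂ) (hz₁ : z₁ ∈ ball (0 : ℂ) 1) (hz₂ : z₂ ∈ ball (0 : ℂ) 1)
    (hne : z₁ ≠ z₂) (w₀ : ℂ) (hw₁ : F z₁ = w₀) (hw₂ : F z₂ = w₀) :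
    ‖w₀‖ ≤ max ‖z₁‖ ‖z₂‖ ^ 2 := by
  have hw₀ : ‖w₀‖ < 1 := mem_ball_zero_iff.mp (hw₁ ▸ hmaps hz₁)
  have hbound := norm_apply_zero_le_mul_of_mapsTo_ball
    ((differentiableOn_blaschkeFactor hw₀).comp hF hmaps)
    (((mapsTo_blaschkeFactor hw₀).comp hmaps).mono_right ball_subset_closedBall)
    (mem_ball_zero_iff.mp hz₁) (mem_ball_zero_iff.mp hz₂) hne
    (by simp [hw₁]) (by simp [hw₂])
  rw [Function.comp_apply, h0, blaschkeFactor_zero, norm_neg] at hbound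
  calc ‖w₀‖ ≤ ‖z₁‖ * ‖z₂‖ := hbound
    _ ≤ max ‖z₁‖ ‖z₂‖ * max ‖z₁‖ ‖z₂‖ :=
      mul_le_mul (le_max_left _ _) (le_max_right _ _) (norm_nonneg _)
        ((norm_nonneg _).trans (le_max_left _ _))
    _ = max ‖z₁‖ ‖z₂‖ ^ 2 := (sq _).symm

theorem stmt_9 (F : ℂ → ℂ) (hF : DifferentiableOn ℂ F (ball 0 1))
    (hmaps : MapsTo F (ball (0 : ℂ) 1) (ball (0 : ℂ) 1))
    (α : ℝ) (hα0 : 0 < α) (hα1 : α ≤ 1)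
    (h0 : F 0 = 0) (hd : deriv F 0 = (α : ℂ))
    (z₁ z₂ : ℂ) (hz₁ : z₁ ∈ ball (0 : ℂ) 1) (hz₂ : z₂ ∈ ball (0 : ℂ) 1)
    (hne : z₁ ≠ z₂) (w₀ : ℂ) (hw₁ : F z₁ = w₀) (hw₂ : F z₂ = w₀) :
    ‖w₀‖ ≤ max ‖z₁‖ ‖z₂‖ ^ 2 :=
  stmt_9_general F hF hmaps h0 z₁ z₂ hz₁ hz₂ hne w₀ hw₁ hw₂
end

section
/- Let F : 𝔻 → 𝔻 be holomorphic with F(0) = 0 and F′(0) = α ∈ (0, 1]. Then F is injective on the open disc of radius r₀ = α/(1 + √(1 − α²)) centered at 0. -/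
/-!
Write `F z = z g z` with `g = dslope F 0`, a holomorphic self-map of the disc with `g 0 = α`
(it stays in the open disc by the maximum modulus principle when `α < 1`). Schwarz's lemma
applied to `g` followed by the disc automorphism sending `α` to `0` puts `g z` in the hyperbolic
disc `|w - α| ≤ t |1 - α w|`, `t = |z|`, whence `Re g z ≥ (α - t) / (1 - α t)`; the Schwarz–Pick
lemma gives `|g' z| ≤ (1 - |g z|²) / (1 - t²)`. Together,
`Re F' z = Re (g z + z g' z) ≥ (α - 2 t + α t²) / (1 - α t)²`, which is positive for `t < r₀`,
the smaller root of the numerator. A function whose derivative has positive real part on a convex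
set is injective there. For `α = 1`, `F` is the identity by the equality case of Schwarz's lemma.
-/

open Metric Set ComplexConjugate

namespace Complex

noncomputable def blaschke (c w : ℂ) : ℂ := (w - c) / (1 - conj c * w)

@[simp] lemma blaschke_self (c : ℂ) : blaschke c c = 0 := by simp [blaschke]

@[simp] lemma blaschke_neg_zero (c : ℂ) : blaschke (-c) 0 = c := by simp [blaschke]

lemma one_sub_conj_mul_ne_zero {c w : ℂ} (hc : ‖c‖ < 1) (hw : ‖w‖ ≤ 1) :
    1 - conj c * w ≠ 0 := by
  rw [sub_ne_zero]
  refine fun h => (?_ : ‖conj c * w‖ < 1).ne' (by rw [← h, norm_one])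
  rw [norm_mul, norm_conj]
  nlinarith [norm_nonneg c, norm_nonneg w]

lemma one_sub_conj_mul_self (c : ℂ) : 1 - conj c * c = ((1 - ‖c‖ ^ 2 : ℝ) : ℂ) := by
  push_cast
  rw [conj_mul']

lemma normSq_one_sub_conj_mul_sub_normSq_sub (c w : ℂ) :
    normSq (1 - conj c * w) - normSq (w - c) = (1 - normSq c) * (1 - normSq w) := by
  simp only [normSq_apply, sub_re, sub_im, mul_re, mul_im, one_re, one_im, conj_re, conj_im]
  ring

lemma norm_blaschke_lt_one {c w : ℂ} (hc : ‖c‖ < 1) (hw : ‖w‖ < 1) : ‖blaschke c w‖ < 1 := by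
  rw [blaschke, norm_div, div_lt_one (norm_pos_iff.mpr (one_sub_conj_mul_ne_zero hc hw.le)),
    ← sq_lt_sq₀ (norm_nonneg _) (norm_nonneg _), Complex.sq_norm, Complex.sq_norm]
  have := normSq_one_sub_conj_mul_sub_normSq_sub c w
  rw [normSq_eq_norm_sq c, normSq_eq_norm_sq w] at this
  nlinarith [mul_pos (sub_pos.mpr (pow_lt_one₀ (norm_nonneg c) hc two_ne_zero))
    (sub_pos.mpr (pow_lt_one₀ (norm_nonneg w) hw two_ne_zero))]

lemma hasDerivAt_blaschke (c : ℂ) {w : ℂ} (hw : 1 - conj c * w ≠ 0) :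
    HasDerivAt (blaschke c) ((1 - conj c * c) / (1 - conj c * w) ^ 2) w := by
  refine (((hasDerivAt_id' w).sub_const c).fun_div
    (((hasDerivAt_id' w).const_mul (conj c)).const_sub 1) hw).congr_deriv ?_
  ring

lemma mapsTo_blaschke {c : ℂ} (hc : ‖c‖ < 1) : MapsTo (blaschke c) (ball 0 1) (ball 0 1) :=
  fun _ hw => mem_ball_zero_iff.mpr (norm_blaschke_lt_one hc (mem_ball_zero_iff.mp hw))

lemma differentiableOn_blaschke {c : ℂ} (hc : ‖c‖ < 1) :
    DifferentiableOn ℂ (blaschke c) (ball 0 1) := fun _ hw =>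
  (hasDerivAt_blaschke c (one_sub_conj_mul_ne_zero hc
    (mem_ball_zero_iff.mp hw).le)).differentiableAt.differentiableWithinAt

variable {g : ℂ → ℂ}

lemma norm_sub_le_norm_mul_norm_one_sub_conj_mul (hg : DifferentiableOn ℂ g (ball 0 1))
    (hm : MapsTo g (ball 0 1) (ball 0 1)) {z : ℂ} (hz : ‖z‖ < 1) :
    ‖g z - g 0‖ ≤ ‖z‖ * ‖1 - conj (g 0) * g z‖ := by
  have hc : ‖g 0‖ < 1 := mem_ball_zero_iff.mp (hm (mem_ball_self one_pos))
  have hgz : ‖g z‖ < 1 := mem_ball_zero_iff.mp (hm (mem_ball_zero_iff.mpr hz))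
  have := norm_le_norm_of_mapsTo_ball ((differentiableOn_blaschke hc).comp hg hm)
    (((mapsTo_blaschke hc).comp hm).mono_right ball_subset_closedBall) (by simp) hz
  rwa [Function.comp_apply, blaschke, norm_div,
    div_le_iff₀ (norm_pos_iff.mpr (one_sub_conj_mul_ne_zero hc hgz.le))] at this

/-- The Schwarz–Pick lemma: conjugating `g` by disc automorphisms moving `z` and `g z` to `0`
reduces it to the Schwarz lemma at the origin. -/
lemma norm_deriv_mul_le_of_mapsTo_ball (hg : DifferentiableOn ℂ g (ball 0 1))
    (hm : MapsTo g (ball 0 1) (ball 0 1)) {z : ℂ} (hz : ‖z‖ < 1) :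
    ‖deriv g z‖ * (1 - ‖z‖ ^ 2) ≤ 1 - ‖g z‖ ^ 2 := by
  set c := g z
  have hc : ‖c‖ < 1 := mem_ball_zero_iff.mp (hm (mem_ball_zero_iff.mpr hz))
  have hz' : ‖-z‖ < 1 := by rwa [norm_neg]
  have hc_pos : 0 < 1 - ‖c‖ ^ 2 := by nlinarith [norm_nonneg c]
  set h := blaschke c ∘ g ∘ blaschke (-z)
  have hh : HasDerivAt h ((1 - ‖c‖ ^ 2 : ℝ) / (1 - ‖c‖ ^ 2 : ℝ) ^ 2 *
      (deriv g z * (1 - ‖z‖ ^ 2 : ℝ))) 0 := by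
    have hφ := hasDerivAt_blaschke (-z) (w := 0) (by simp)
    have hg' : HasDerivAt g (deriv g z) (blaschke (-z) 0) := by
      rw [blaschke_neg_zero]
      exact (hg.differentiableAt (isOpen_ball.mem_nhds (mem_ball_zero_iff.mpr hz))).hasDerivAt
    have hσ : HasDerivAt (blaschke c) ((1 - conj c * c) / (1 - conj c * c) ^ 2)
        (g (blaschke (-z) 0)) := by
      rw [blaschke_neg_zero]
      exact hasDerivAt_blaschke c (one_sub_conj_mul_ne_zero hc hc.le)
    have := hσ.comp 0 (hg'.comp 0 hφ)
    rw [one_sub_conj_mul_self, map_neg, neg_mul_neg, one_sub_conj_mul_self] at this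
    simpa using this
  have hmaps : MapsTo h (ball 0 1) (ball 0 1) :=
    (mapsTo_blaschke hc).comp (hm.comp (mapsTo_blaschke hz'))
  have hh0 : h 0 = 0 := by simp [h, c]
  have hsch : ‖deriv h 0‖ ≤ 1 :=
    norm_deriv_le_one_of_mapsTo_ball
      ((differentiableOn_blaschke hc).comp ((hg.comp (differentiableOn_blaschke hz')
        (mapsTo_blaschke hz'))) (hm.comp (mapsTo_blaschke hz')))
      (by rw [hh0]; exact hmaps.mono_right ball_subset_closedBall) one_pos
  rw [hh.deriv, norm_mul, norm_div, norm_pow, norm_mul, norm_real, norm_real,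
    Real.norm_of_nonneg hc_pos.le, Real.norm_of_nonneg (by nlinarith [norm_nonneg z]),
    div_mul_eq_mul_div, div_le_one (by positivity)] at hsch
  exact le_of_mul_le_mul_left (by nlinarith) hc_pos

/-- The leftmost point of the disc `‖w - a‖ ≤ t ‖1 - a w‖` is `(a - t) / (1 - a t)`. -/
lemma sub_le_mul_re_of_norm_sub_le {a t : ℝ} {w : ℂ} (ha0 : 0 ≤ a) (ha1 : a ≤ 1) (ht0 : 0 ≤ t)
    (ht1 : t ≤ 1) (hw : ‖w‖ ≤ 1) (h : ‖w - a‖ ≤ t * ‖1 - a * w‖) :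
    a - t ≤ (1 - a * t) * w.re := by
  have hsq := pow_le_pow_left₀ (norm_nonneg _) h 2
  simp only [mul_pow, Complex.sq_norm, normSq_apply, sub_re, sub_im, mul_re, mul_im, one_re,
    one_im, ofReal_re, ofReal_im] at hsq
  have hx : a * w.re ≤ 1 := by nlinarith [re_le_norm w]
  have hat : a * t ≤ 1 := by nlinarith
  -- the imaginary part only helps, since `(a t)² ≤ 1`
  have hre : (w.re - a) ^ 2 ≤ (t * (1 - a * w.re)) ^ 2 := by
    nlinarith [mul_nonneg (sq_nonneg w.im) (sub_nonneg.mpr (mul_le_one₀ hat (by positivity) hat))]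
  nlinarith [(abs_le_of_sq_le_sq' hre (by nlinarith)).1]

lemma hasDerivAt_of_dslope {F : ℂ → ℂ} {c z : ℂ} (hg : DifferentiableAt ℂ (dslope F c) z) :
    HasDerivAt F (dslope F c z + (z - c) * deriv (dslope F c) z) z := by
  have hF : F = fun w => F c + (w - c) * dslope F c w := by
    funext w
    rw [← smul_eq_mul, sub_smul_dslope, add_sub_cancel]
  have h := (((hasDerivAt_id' z).sub_const c).fun_mul hg.hasDerivAt).const_add (F c)
  rw [← hF, one_mul] at h
  exact h

lemma mapsTo_dslope_of_norm_deriv_lt_one {F : ℂ → ℂ} (hF : DifferentiableOn ℂ F (ball 0 1))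
    (hmaps : MapsTo F (ball 0 1) (closedBall (F 0) 1)) (hd : ‖deriv F 0‖ < 1) :
    MapsTo (dslope F 0) (ball 0 1) (ball 0 1) := by
  intro z hz
  have hle : ∀ w ∈ ball (0 : ℂ) 1, ‖dslope F 0 w‖ ≤ 1 := fun w hw => by
    simpa using norm_dslope_le_div_of_mapsTo_ball hF hmaps hw
  refine mem_ball_zero_iff.mpr ((hle z hz).lt_of_ne fun h => hd.ne ?_)
  -- maximum modulus: `‖dslope F 0‖` would be constantly `1`
  have hmax : IsMaxOn (norm ∘ dslope F 0) (ball 0 1) z :=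
    fun w hw => by simpa [h] using hle w hw
  have := norm_eqOn_of_isPreconnected_of_isMaxOn (convex_ball 0 1).isPreconnected isOpen_ball
    ((differentiableOn_dslope (isOpen_ball.mem_nhds (mem_ball_self one_pos))).mpr hF) hz hmax
    (mem_ball_self one_pos)
  simpa [h] using this

end Complex

theorem Convex.injOn_of_hasDerivAt_of_re_pos {s : Set ℂ} (hs : Convex ℝ s) {F F' : ℂ → ℂ}
    (hF : ∀ z ∈ s, HasDerivAt F (F' z) z) (hpos : ∀ z ∈ s, 0 < (F' z).re) : InjOn F s := by
  intro a ha b hb hab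
  by_contra hne
  have hab' : a - b ≠ 0 := sub_ne_zero.mpr hne
  set ℓ : ℂ → ℂ := fun u => b + u * (a - b)
  have hℓ : ∀ r ∈ Icc (0 : ℝ) 1, ℓ r ∈ s := fun r hr => by
    simpa [ℓ, Complex.real_smul] using hs.add_smul_sub_mem hb ha hr
  -- the real part of `F` along the segment, rotated by `a - b`, has derivative `Re F' > 0`
  have hφ : ∀ r ∈ Icc (0 : ℝ) 1,
      HasDerivAt (fun r : ℝ => (F (ℓ r) / (a - b)).re) (F' (ℓ r)).re r := fun r hr => by
    have h := ((hF _ (hℓ r hr)).comp (r : ℂ)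
      (((hasDerivAt_id' (r : ℂ)).mul_const (a - b)).const_add b)).div_const (a - b)
    rw [one_mul, mul_div_cancel_right₀ _ hab'] at h
    exact h.real_of_complex
  obtain ⟨c, hc, hc0⟩ := exists_hasDerivAt_eq_zero zero_lt_one
    (fun r hr => (hφ r hr).continuousAt.continuousWithinAt) (by simp [ℓ, hab])
    (fun r hr => hφ r (Ioo_subset_Icc_self hr))
  exact (hpos _ (hℓ c (Ioo_subset_Icc_self hc))).ne' hc0

/-- The smaller root of `α t² - 2 t + α`. -/
noncomputable def landauRadius (α : ℝ) : ℝ := α / (1 + √(1 - α ^ 2))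

lemma landauRadius_le {α : ℝ} (hα : 0 ≤ α) : landauRadius α ≤ α :=
  div_le_self hα (le_add_of_nonneg_right (Real.sqrt_nonneg _))

@[simp] lemma landauRadius_one : landauRadius 1 = 1 := by norm_num [landauRadius]

lemma sub_two_mul_add_mul_sq_pos {α t : ℝ} (hα0 : 0 < α) (hα1 : α ≤ 1) (ht0 : 0 ≤ t)
    (ht : t < landauRadius α) : 0 < α - 2 * t + α * t ^ 2 := by
  set q := √(1 - α ^ 2)
  have hq2 : q ^ 2 = 1 - α ^ 2 := Real.sq_sqrt (by nlinarith)
  have hq0 : 0 ≤ q := Real.sqrt_nonneg _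
  have htq : t * (1 + q) < α := (lt_div_iff₀ (by positivity)).mp ht
  -- `(α - t (1 + q)) (α - t (1 - q)) = α (α - 2 t + α t²)`
  have hprod : 0 < (α - t * (1 + q)) * (α - t * (1 - q)) :=
    mul_pos (by linarith) (by nlinarith [mul_nonneg ht0 hq0])
  nlinarith

/-- With `x = Re g z` and `D = ‖g' z‖`, this bounds `(1 - a t)² Re (g z + z g' z)` from below. -/
lemma landau_estimate {a t x D : ℝ} (ht0 : 0 ≤ t) (ht1 : t < 1) (hta : t ≤ a) (ha1 : a ≤ 1)
    (hx : a - t ≤ (1 - a * t) * x) (hD : D * (1 - t ^ 2) ≤ 1 - x ^ 2) :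
    a - 2 * t + a * t ^ 2 ≤ (1 - a * t) ^ 2 * (x - t * D) := by
  have hu : 0 < 1 - a * t := by nlinarith
  have hsq : (a - t) ^ 2 ≤ ((1 - a * t) * x) ^ 2 := pow_le_pow_left₀ (by linarith) hx 2
  have hD' : (1 - a * t) ^ 2 * D ≤ 1 - a ^ 2 := by
    refine le_of_mul_le_mul_right ?_ (by nlinarith : (0 : ℝ) < 1 - t ^ 2)
    nlinarith [mul_le_mul_of_nonneg_left hD (sq_nonneg (1 - a * t))]
  nlinarith [mul_le_mul_of_nonneg_left hD' ht0]

open Complex in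
theorem re_deriv_pos_of_norm_lt_landauRadius {F : ℂ → ℂ} (hF : DifferentiableOn ℂ F (ball 0 1))
    (hmaps : MapsTo F (ball 0 1) (closedBall (F 0) 1)) {α : ℝ} (hα0 : 0 < α) (hα1 : α < 1)
    (hd : deriv F 0 = α) {z : ℂ} (hz : ‖z‖ < landauRadius α) : 0 < (deriv F z).re := by
  set g := dslope F 0
  set t := ‖z‖
  have hta : t < α := hz.trans_le (landauRadius_le hα0.le)
  have hz1 : ‖z‖ < 1 := hta.trans hα1
  have hg : DifferentiableOn ℂ g (ball 0 1) :=
    (differentiableOn_dslope (isOpen_ball.mem_nhds (mem_ball_self one_pos))).mpr hF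
  have hgm : MapsTo g (ball 0 1) (ball 0 1) := mapsTo_dslope_of_norm_deriv_lt_one hF hmaps
    (by rwa [hd, norm_real, Real.norm_of_nonneg hα0.le])
  have hg0 : g 0 = α := by simp only [g, dslope_same, hd]
  have hre : α - t ≤ (1 - α * t) * (g z).re := by
    have h := norm_sub_le_norm_mul_norm_one_sub_conj_mul hg hgm hz1
    rw [hg0, conj_ofReal] at h
    exact sub_le_mul_re_of_norm_sub_le hα0.le hα1.le (norm_nonneg z) hz1.le
      (mem_ball_zero_iff.mp (hgm (mem_ball_zero_iff.mpr hz1))).le h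
  have hpick : ‖deriv g z‖ * (1 - t ^ 2) ≤ 1 - (g z).re ^ 2 :=
    (norm_deriv_mul_le_of_mapsTo_ball hg hgm hz1).trans
      (by nlinarith [re_sq_le_normSq (g z), normSq_eq_norm_sq (g z)])
  have hderiv : deriv F z = g z + z * deriv g z := by
    simpa using (hasDerivAt_of_dslope (hg.differentiableAt
      (isOpen_ball.mem_nhds (mem_ball_zero_iff.mpr hz1)))).deriv
  have hlow : (g z).re - t * ‖deriv g z‖ ≤ (deriv F z).re := by
    rw [hderiv, add_re, ← norm_mul]
    linarith [neg_le_of_abs_le (abs_re_le_norm (z * deriv g z))]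
  have hest := landau_estimate (norm_nonneg z) hz1 hta.le hα1.le hre hpick
  have hquad := sub_two_mul_add_mul_sq_pos hα0 hα1.le (norm_nonneg z) hz
  nlinarith [sq_nonneg (1 - α * t)]

lemma eqOn_add_of_deriv_eq_one {F : ℂ → ℂ} (hF : DifferentiableOn ℂ F (ball 0 1))
    (hmaps : MapsTo F (ball 0 1) (closedBall (F 0) 1)) (hd : deriv F 0 = 1) :
    EqOn F (fun z => F 0 + z) (ball 0 1) := by
  simpa [hd] using Complex.affine_of_mapsTo_ball_of_norm_dslope_eq_div hF hmaps
    (mem_ball_self one_pos) (by simp [hd])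

theorem stmt_10 (F : ℂ → ℂ) (hF : DifferentiableOn ℂ F (ball 0 1))
    (hmaps : MapsTo F (ball (0 : ℂ) 1) (ball (0 : ℂ) 1))
    (α : ℝ) (hα0 : 0 < α) (hα1 : α ≤ 1)
    (h0 : F 0 = 0) (hd : deriv F 0 = (α : ℂ)) :
    InjOn F (ball 0 (α / (1 + Real.sqrt (1 - α ^ 2)))) := by
  change InjOn F (ball 0 (landauRadius α))
  have hmaps' : MapsTo F (ball 0 1) (closedBall (F 0) 1) := by
    rw [h0]
    exact hmaps.mono_right ball_subset_closedBall
  rcases hα1.lt_or_eq with hα1 | rfl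
  · have hsub : ball (0 : ℂ) (landauRadius α) ⊆ ball 0 1 :=
      ball_subset_ball ((landauRadius_le hα0.le).trans hα1.le)
    exact (convex_ball 0 _).injOn_of_hasDerivAt_of_re_pos
      (fun z hz => (hF.differentiableAt (isOpen_ball.mem_nhds (hsub hz))).hasDerivAt)
      (fun z hz => re_deriv_pos_of_norm_lt_landauRadius hF hmaps' hα0 hα1 hd
        (mem_ball_zero_iff.mp hz))
  · rw [landauRadius_one]
    exact ((eqOn_add_of_deriv_eq_one hF hmaps' (by simpa using hd)).injOn_iff).mpr
      (add_right_injective _).injOn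
end

section
/- Let F be holomorphic on the open unit disc 𝔻 and assume F(0) = 0, F′(0) = 1, and |F(z)| ≤ M(r) := (1/2)·log((1 + r)/(1 − r)) on |z| ≤ r for some r ∈ (0, 1) with M(r) ≥ r. Then F is injective on the disc of radius ρ(r) = M(r) − √(M(r)² − r²) centered at 0, and F(B(0, ρ(r))) contains B(0, M(r)·ρ(r)²/r²). -/
set_option maxHeartbeats 1000000

open Metric Set Complex


-- key polynomial inequality
lemma landau_poly (M t u : ℝ) (hM : 1 < M) (ht0 : 0 ≤ t) (ht1 : t < 1)
    (hq : 2*M*t ≤ t^2+1) (hu0 : 0 ≤ u) (hu1 : u ≤ 1) :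
    (M-t)*M*(u*(1-t^2)+t*(1-u^2)) + u*(M-t)^2*(1-t^2)
      ≤ (2*M-t)*(M-t*u)*(1-t^2) := by
  have hE1 : 0 ≤ 2*M - t - 2*M*t + 2*t^2 + t^3 - 2*M*t^2 := by
    rcases le_or_gt (t^2+t) 1 with h | h
    · nlinarith [mul_nonneg (sub_nonneg.2 hM.le) (sub_nonneg.2 h)]
    · have ht0' : 0 < t := by nlinarith
      have hq0 : 0 ≤ t^2 + 1 - 2*M*t := by linarith
      nlinarith [mul_nonneg hq0 (by nlinarith : (0:ℝ) ≤ t^2 + t - 1)]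
  nlinarith [mul_nonneg (mul_nonneg (by linarith : (0:ℝ) ≤ M) (sub_nonneg.2 hu1)) hE1,
    mul_nonneg (mul_nonneg (mul_nonneg (by linarith : (0:ℝ) ≤ M) (sq_nonneg (1-u))) ht0)
      (by linarith : (0:ℝ) ≤ M - t)]


lemma dslope_le {g : ℂ → ℂ} {C : ℝ} (hd : DifferentiableOn ℂ g (ball 0 1))
    (hg0 : g 0 = 0) (hb : ∀ z ∈ ball (0:ℂ) 1, ‖g z‖ ≤ C) :
    ∀ z ∈ ball (0:ℂ) 1, ‖dslope g 0 z‖ ≤ C := by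
  intro z hz
  refine le_of_forall_pos_le_add fun ε hε => ?_
  have hmaps : MapsTo g (ball 0 1) (ball (g 0) (C + ε)) := fun w hw => by
    rw [hg0, mem_ball, dist_eq_norm, sub_zero]
    exact lt_of_le_of_lt (hb w hw) (by linarith)
  simpa using Complex.norm_dslope_le_div_of_mapsTo_ball hd (hmaps.mono_right ball_subset_closedBall) hz

lemma normSq_norm (z : ℂ) : ‖z‖^2 = Complex.normSq z := by
  rw [Complex.sq_norm]

lemma sq_norm_le_one {a : ℂ} (ha : ‖a‖ ≤ 1) : a.re^2 + a.im^2 ≤ 1 := by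
  have h := normSq_norm a
  rw [Complex.normSq_apply] at h
  nlinarith [norm_nonneg a]

lemma norm_le_norm_of_sq {x y : ℂ} (h : ‖x‖^2 ≤ ‖y‖^2) : ‖x‖ ≤ ‖y‖ :=
  le_of_pow_le_pow_left₀ two_ne_zero (norm_nonneg y) h

lemma mobius_num_le (a b : ℂ) (ha : ‖a‖ ≤ 1) (hb : ‖b‖ ≤ 1) :
    ‖b - a‖ ≤ ‖1 - (starRingEnd ℂ) a * b‖ := by
  apply norm_le_norm_of_sq
  have ha2 := sq_norm_le_one ha
  have hb2 := sq_norm_le_one hb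
  rw [normSq_norm, normSq_norm]
  simp only [Complex.normSq_apply, Complex.sub_re, Complex.sub_im, Complex.one_re, Complex.one_im,
    Complex.mul_re, Complex.mul_im, Complex.conj_re, Complex.conj_im]
  nlinarith [sq_nonneg (a.re*b.re + a.im*b.im), sq_nonneg (a.re*b.im - a.im*b.re),
    mul_nonneg (sub_nonneg.2 ha2) (sub_nonneg.2 hb2)]

lemma mobius_num_lt (a b : ℂ) (ha : ‖a‖ < 1) (hb : ‖b‖ < 1) :
    ‖b - a‖ < ‖1 - (starRingEnd ℂ) a * b‖ := by
  have ha2 := sq_norm_le_one ha.le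
  have hb2 := sq_norm_le_one hb.le
  have ha2' : a.re^2 + a.im^2 < 1 := by
    have h := normSq_norm a
    rw [Complex.normSq_apply] at h
    nlinarith [norm_nonneg a]
  have hb2' : b.re^2 + b.im^2 < 1 := by
    have h := normSq_norm b
    rw [Complex.normSq_apply] at h
    nlinarith [norm_nonneg b]
  have h2 : ‖b - a‖^2 < ‖1 - (starRingEnd ℂ) a * b‖^2 := by
    rw [normSq_norm, normSq_norm]
    simp only [Complex.normSq_apply, Complex.sub_re, Complex.sub_im, Complex.one_re, Complex.one_im,
      Complex.mul_re, Complex.mul_im, Complex.conj_re, Complex.conj_im]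
    nlinarith [sq_nonneg (a.re*b.re + a.im*b.im), sq_nonneg (a.re*b.im - a.im*b.re),
      mul_pos (sub_pos.2 ha2') (sub_pos.2 hb2')]
  nlinarith [norm_nonneg (b-a), norm_nonneg (1 - (starRingEnd ℂ) a * b)]


lemma one_sub_ne {w : ℂ} (h : ‖w‖ < 1) : (1:ℂ) - w ≠ 0 := by
  intro hc
  have : (1:ℂ) = w := by linear_combination hc
  rw [← this] at h; simp at h

lemma schwarz_pick {τ : ℂ → ℂ} (hd : DifferentiableOn ℂ τ (ball 0 1))
    (hb : ∀ z ∈ ball (0:ℂ) 1, ‖τ z‖ ≤ 1) {z₀ : ℂ} (hz₀ : z₀ ∈ ball (0:ℂ) 1) :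
    ‖deriv τ z₀‖ * (1 - ‖z₀‖^2) ≤ 1 - ‖τ z₀‖^2 := by
  have ht1 : ‖z₀‖ < 1 := mem_ball_zero_iff.1 hz₀
  have hu1 : ‖τ z₀‖ ≤ 1 := hb z₀ hz₀
  rcases eq_or_lt_of_le hu1 with hu | hu
  · -- max modulus: τ locally constant, deriv = 0
    have hmax : IsLocalMax (norm ∘ τ) z₀ := by
      filter_upwards [isOpen_ball.mem_nhds hz₀] with w hw
      simpa [← hu] using hb w hw
    have hdiff : ∀ᶠ z in nhds z₀, DifferentiableAt ℂ τ z := by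
      filter_upwards [isOpen_ball.mem_nhds hz₀] with w hw
      exact hd.differentiableAt (isOpen_ball.mem_nhds hw)
    have heq : ∀ᶠ y in nhds z₀, τ y = τ z₀ :=
      Complex.eventually_eq_of_isLocalMax_norm hdiff hmax
    have : deriv τ z₀ = 0 := by
      have h2 : deriv τ z₀ = deriv (fun _ => τ z₀) z₀ := Filter.EventuallyEq.deriv_eq heq
      simpa using h2
    rw [this, norm_zero, zero_mul, sub_nonneg, ← hu]
    nlinarith [norm_nonneg (τ z₀), hu1]
  · -- main case : ‖τ z₀‖ < 1
    set a := τ z₀ with ha_def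
    set σ : ℂ → ℂ := fun w => (w + z₀) / (1 + (starRingEnd ℂ) z₀ * w) with hσ_def
    have hσden : ∀ w ∈ ball (0:ℂ) 1, (1:ℂ) + (starRingEnd ℂ) z₀ * w ≠ 0 := by
      intro w hw
      have : ‖-((starRingEnd ℂ) z₀ * w)‖ < 1 := by
        rw [norm_neg, norm_mul, RCLike.norm_conj]
        exact mul_lt_one_of_nonneg_of_lt_one_left (norm_nonneg _) ht1 (mem_ball_zero_iff.1 hw).le
      have h2 := one_sub_ne this
      simpa using h2
    have hσmem : ∀ w ∈ ball (0:ℂ) 1, σ w ∈ ball (0:ℂ) 1 := by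
      intro w hw
      rw [mem_ball_zero_iff, hσ_def]
      have hnum : ‖w + z₀‖ < ‖1 + (starRingEnd ℂ) z₀ * w‖ := by
        have := mobius_num_lt (-z₀) w (by simpa using ht1) (mem_ball_zero_iff.1 hw)
        simpa [sub_neg_eq_add] using this
      rw [norm_div]
      rw [div_lt_one (lt_of_le_of_lt (norm_nonneg _) hnum)]
      exact hnum
    have hσ0 : σ 0 = z₀ := by simp [hσ_def]
    -- g = Möbius ∘ τ ∘ σ
    set g : ℂ → ℂ := fun w => (τ (σ w) - a) / (1 - (starRingEnd ℂ) a * τ (σ w)) with hg_def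
    have hgden : ∀ w ∈ ball (0:ℂ) 1, (1:ℂ) - (starRingEnd ℂ) a * τ (σ w) ≠ 0 := by
      intro w hw
      apply one_sub_ne
      rw [norm_mul, RCLike.norm_conj]
      calc ‖a‖ * ‖τ (σ w)‖ ≤ ‖a‖ * 1 := by
            exact mul_le_mul_of_nonneg_left (hb _ (hσmem w hw)) (norm_nonneg a)
        _ < 1 := by rw [mul_one]; exact hu
    have hσdiff : DifferentiableOn ℂ σ (ball 0 1) :=
      DifferentiableOn.div (differentiableOn_id.add_const z₀)
        ((differentiableOn_const _).add ((differentiableOn_const _).mul differentiableOn_id))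
        hσden
    have hτσ : DifferentiableOn ℂ (fun w => τ (σ w)) (ball 0 1) :=
      hd.comp hσdiff hσmem
    have hgdiff : DifferentiableOn ℂ g (ball 0 1) :=
      DifferentiableOn.div (hτσ.sub_const a)
        ((differentiableOn_const _).sub ((differentiableOn_const _).mul hτσ)) hgden
    have hg0 : g 0 = 0 := by
      rw [hg_def]; simp only [hσ0, ← ha_def]
      rw [sub_self, zero_div]
    have hgb : ∀ w ∈ ball (0:ℂ) 1, ‖g w‖ ≤ 1 := by
      intro w hw
      rw [hg_def, norm_div]
      exact div_le_one_of_le₀ (mobius_num_le a (τ (σ w)) hu.le (hb _ (hσmem w hw))) (norm_nonneg _)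
    -- derivative computation
    have hσhas : HasDerivAt σ (1 - (Complex.normSq z₀ : ℂ)) 0 := by
      have h1 : HasDerivAt (fun w : ℂ => w + z₀) 1 0 := (hasDerivAt_id 0).add_const z₀
      have h2 : HasDerivAt (fun w : ℂ => (1:ℂ) + (starRingEnd ℂ) z₀ * w) ((starRingEnd ℂ) z₀) 0 := by
        simpa using ((hasDerivAt_id 0).const_mul ((starRingEnd ℂ) z₀)).const_add 1
      have h3 := h1.div h2 (by simpa using hσden 0 (mem_ball_self one_pos))
      refine (h3 : HasDerivAt σ _ 0).congr_deriv ?_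
      have : z₀ * (starRingEnd ℂ) z₀ = (Complex.normSq z₀ : ℂ) := Complex.mul_conj z₀
      simp only [mul_zero, add_zero, zero_add, one_mul, one_pow, div_one]
      linear_combination -this
    have hτhas : HasDerivAt τ (deriv τ z₀) z₀ :=
      (hd.differentiableAt (isOpen_ball.mem_nhds hz₀)).hasDerivAt
    have hτhas' : HasDerivAt τ (deriv τ z₀) (σ 0) := by rw [hσ0]; exact hτhas
    have hcomp : HasDerivAt (fun w => τ (σ w)) (deriv τ z₀ * (1 - (Complex.normSq z₀ : ℂ))) 0 := by
      exact HasDerivAt.comp 0 hτhas' hσhas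
    have hgderiv : HasDerivAt g ((deriv τ z₀ * (1 - (Complex.normSq z₀ : ℂ))) / (1 - (Complex.normSq a : ℂ))) 0 := by
      have hn : HasDerivAt (fun w => τ (σ w) - a) (deriv τ z₀ * (1 - (Complex.normSq z₀ : ℂ))) 0 :=
        hcomp.sub_const a
      have hdd : HasDerivAt (fun w => (1:ℂ) - (starRingEnd ℂ) a * τ (σ w))
          (-((starRingEnd ℂ) a * (deriv τ z₀ * (1 - (Complex.normSq z₀ : ℂ))))) 0 := by
        simpa using (hcomp.const_mul ((starRingEnd ℂ) a)).const_sub 1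
      have hden0 : (1:ℂ) - (starRingEnd ℂ) a * τ (σ 0) ≠ 0 := hgden 0 (mem_ball_self one_pos)
      have h3 := hn.div hdd hden0
      have hmc : (starRingEnd ℂ) a * a = (Complex.normSq a : ℂ) := by
        rw [mul_comm]; exact Complex.mul_conj a
      have hden1 : (1:ℂ) - (Complex.normSq a : ℂ) ≠ 0 := by
        rw [← hmc]; simpa [hσ0, ha_def] using hden0
      have hval : (deriv τ z₀ * (1 - (Complex.normSq z₀ : ℂ)) * (1 - (starRingEnd ℂ) a * τ (σ 0))
            - (τ (σ 0) - a) * -((starRingEnd ℂ) a * (deriv τ z₀ * (1 - (Complex.normSq z₀ : ℂ)))))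
            / (1 - (starRingEnd ℂ) a * τ (σ 0)) ^ 2
          = (deriv τ z₀ * (1 - (Complex.normSq z₀ : ℂ))) / (1 - (Complex.normSq a : ℂ)) := by
        rw [hσ0, ← ha_def, ← hmc]
        rw [sub_self, zero_mul, sub_zero]
        have hden2 : (1:ℂ) - (starRingEnd ℂ) a * a ≠ 0 := by rw [hmc]; exact hden1
        field_simp
      rw [← hval]
      exact h3
    -- apply Schwarz to g
    have hbound := dslope_le hgdiff hg0 hgb 0 (mem_ball_self one_pos)
    rw [dslope_same, hgderiv.deriv] at hbound
    -- unfold norms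
    have hnormz : ((1:ℂ) - (Complex.normSq z₀ : ℂ)) = ((1 - Complex.normSq z₀ : ℝ) : ℂ) := by
      push_cast; ring
    have hnorma : ((1:ℂ) - (Complex.normSq a : ℂ)) = ((1 - Complex.normSq a : ℝ) : ℂ) := by
      push_cast; ring
    have h1 : (0:ℝ) ≤ 1 - Complex.normSq z₀ := by
      rw [← normSq_norm]; nlinarith [norm_nonneg z₀]
    have h2 : (0:ℝ) < 1 - Complex.normSq a := by
      rw [← normSq_norm]; nlinarith [norm_nonneg a]
    rw [norm_div, norm_mul, hnormz, hnorma, Complex.norm_real, Complex.norm_real, Real.norm_eq_abs, Real.norm_eq_abs,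
      _root_.abs_of_nonneg h1, _root_.abs_of_pos h2, div_le_one h2] at hbound
    rw [normSq_norm a, normSq_norm z₀]
    exact hbound


lemma theta_bound (M : ℝ) (hM : 1 < M) (d : ℂ) (hd : ‖d‖ ≤ M) :
    ‖(M:ℂ)*(d-1)‖ ≤ ‖(M:ℂ)^2 - d‖ := by
  apply norm_le_norm_of_sq
  have hd2 : d.re^2 + d.im^2 ≤ M^2 := by
    have h := normSq_norm d
    rw [Complex.normSq_apply] at h
    nlinarith [norm_nonneg d]
  have hcast : ((M:ℂ))^2 = ((M^2 : ℝ) : ℂ) := by push_cast; ring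
  rw [hcast, normSq_norm, normSq_norm]
  simp only [Complex.normSq_apply, Complex.sub_re, Complex.sub_im, Complex.mul_re, Complex.mul_im,
    Complex.one_re, Complex.one_im, Complex.ofReal_re, Complex.ofReal_im]
  ring_nf
  nlinarith [mul_nonneg (mul_nonneg (by nlinarith : (0:ℝ) ≤ M^2-1) (by nlinarith : (0:ℝ) ≤ M^2 - (d.re^2+d.im^2))) (by norm_num : (0:ℝ) ≤ 1), sq_nonneg M]


lemma landau_real_core (M t u E D' N : ℝ) (hM : 1 < M) (ht0 : 0 ≤ t) (ht1 : t < 1)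
    (hq : 2*M*t ≤ t^2 + 1) (hu0 : 0 ≤ u) (hu1 : u ≤ 1)
    (hD'0 : 0 ≤ D') (hD' : D'*(1-t^2) ≤ 1 - u^2)
    (hN0 : 0 ≤ N) (hN : N ≤ (M^2-1)*t*M/(M-t))
    (hE0 : 0 ≤ E) (hE : E*(M - t*u) ≤ (u + t*D')*N + t*u*(M^2-1)) :
    E ≤ (M^2-1)*t*(2*M-t)/(M-t)^2 := by
  have h1t : (0:ℝ) < 1 - t^2 := by nlinarith
  have hMt : (0:ℝ) < M - t := by nlinarith
  have hMtu : (0:ℝ) < M - t*u := by nlinarith [mul_le_one₀ ht1.le hu0 hu1]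
  have hD'le : D' ≤ (1-u^2)/(1-t^2) := by rw [le_div_iff₀ h1t]; linarith
  have s1 : (u + t*D')*N ≤ (u + t*((1-u^2)/(1-t^2))) * ((M^2-1)*t*M/(M-t)) := by
    apply mul_le_mul _ hN hN0 _
    · gcongr
    · exact add_nonneg hu0 (mul_nonneg ht0 (div_nonneg (by nlinarith) h1t.le))
  have s2 : (u + t*((1-u^2)/(1-t^2))) * ((M^2-1)*t*M/(M-t)) + t*u*(M^2-1)
      ≤ (M^2-1)*t*(2*M-t)/(M-t)^2 * (M - t*u) := by
    rw [← sub_nonneg]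
    have key := landau_poly M t u hM ht0 ht1 hq hu0 hu1
    have expand : (M^2-1)*t*(2*M-t)/(M-t)^2 * (M-t*u)
        - ((u + t*((1-u^2)/(1-t^2))) * ((M^2-1)*t*M/(M-t)) + t*u*(M^2-1))
        = ((M^2-1)*t) * ( (2*M-t)*(M-t*u)*(1-t^2)
            - ((M-t)*M*(u*(1-t^2)+t*(1-u^2)) + u*(M-t)^2*(1-t^2)) )
          / ((M-t)^2 * (1-t^2)) := by
      field_simp
    rw [expand]
    have h2 : (0:ℝ) ≤ (M^2-1)*t := mul_nonneg (by nlinarith) ht0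
    have h3 : (0:ℝ) ≤ (2*M-t)*(M-t*u)*(1-t^2)
            - ((M-t)*M*(u*(1-t^2)+t*(1-u^2)) + u*(M-t)^2*(1-t^2)) := by linarith
    positivity
  have := le_trans hE (by linarith : (u + t*D')*N + t*u*(M^2-1)
      ≤ (M^2-1)*t*(2*M-t)/(M-t)^2 * (M - t*u))
  calc E = E*(M-t*u)/(M-t*u) := by field_simp
    _ ≤ (M^2-1)*t*(2*M-t)/(M-t)^2 * (M-t*u)/(M-t*u) := by gcongr
    _ = (M^2-1)*t*(2*M-t)/(M-t)^2 := by field_simp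


lemma aux_qt (M ρ t : ℝ) (hρM : ρ < M) (hρid : ρ^2 - 2*M*ρ + 1 = 0)
    (h0 : 0 ≤ t) (h1 : t ≤ ρ) : 2*M*t ≤ t^2+1 := by
  nlinarith [mul_nonneg (by linarith : (0:ℝ) ≤ ρ - t) (by linarith : (0:ℝ) ≤ 2*M - t - ρ)]

lemma aux_kmono (M t T : ℝ) (hM : 1 < M) (h0 : 0 ≤ t) (h1 : t ≤ T) (h2 : T < 1) :
    (M^2-1)*t*(2*M-t)/(M-t)^2 ≤ (M^2-1)*T*(2*M-T)/(M-T)^2 := by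
  have hMt : (0:ℝ) < M - t := by nlinarith
  have hMT : (0:ℝ) < M - T := by nlinarith
  rw [div_le_div_iff₀ (by positivity) (by positivity)]
  nlinarith [mul_nonneg (mul_nonneg (by linarith : (0:ℝ) ≤ T - t)
    (by nlinarith : (0:ℝ) ≤ 2*M - T - t)) (by nlinarith : (0:ℝ) ≤ M^2),
    mul_nonneg (mul_nonneg (mul_nonneg (by linarith : (0:ℝ) ≤ T - t)
    (by nlinarith : (0:ℝ) ≤ 2*M - T - t)) (by nlinarith : (0:ℝ) ≤ M^2)) (by nlinarith : (0:ℝ) ≤ M^2 - 1)]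

lemma aux_klt1 (M ρ T : ℝ) (hM : 1 < M) (hρM : ρ < M) (hρid : ρ^2 - 2*M*ρ + 1 = 0)
    (h0 : 0 ≤ T) (h1 : T < ρ) : (M^2-1)*T*(2*M-T)/(M-T)^2 < 1 := by
  have hMT : (0:ℝ) < M - T := by nlinarith
  rw [div_lt_one (by positivity)]
  nlinarith [mul_pos (by linarith : (0:ℝ) < ρ - T) (by linarith : (0:ℝ) < 2*M - ρ - T),
    mul_pos (by linarith : (0:ℝ) < M) (by linarith : (0:ℝ) < M)]

lemma aux_k0 (M T : ℝ) (hM : 1 < M) (h0 : 0 ≤ T) (h1 : T < 1) :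
    0 ≤ (M^2-1)*T*(2*M-T)/(M-T)^2 := by
  have : (0:ℝ) ≤ (M^2-1)*T*(2*M-T) :=
    mul_nonneg (mul_nonneg (by nlinarith) h0) (by nlinarith)
  positivity

theorem landau_core (f : ℂ → ℂ) (R M : ℝ) (hR : 1 < R)
    (hf : DifferentiableOn ℂ f (ball 0 R)) (hf0 : f 0 = 0) (hf1 : deriv f 0 = 1)
    (hM : 1 < M) (hb : ∀ z ∈ ball (0:ℂ) 1, ‖f z‖ ≤ M) :
    InjOn f (ball 0 (M - Real.sqrt (M^2-1))) ∧
      ball (0:ℂ) (M * (M - Real.sqrt (M^2-1))^2) ⊆ f '' ball 0 (M - Real.sqrt (M^2-1)) := by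
  -- basic facts about ρ
  set ρ : ℝ := M - Real.sqrt (M^2-1) with hρdef
  have hs2 : Real.sqrt (M^2-1) ^ 2 = M^2 - 1 := Real.sq_sqrt (by nlinarith)
  have hs0 : 0 ≤ Real.sqrt (M^2-1) := Real.sqrt_nonneg _
  have hsM : Real.sqrt (M^2-1) < M := by nlinarith [hs2, hs0]
  have hρpos : 0 < ρ := by simp only [hρdef]; linarith
  have hρ1 : ρ < 1 := by nlinarith [hs2, hs0]
  have hρid : ρ^2 - 2*M*ρ + 1 = 0 := by simp only [hρdef]; nlinarith [hs2]
  have hρM : ρ < M := by nlinarith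
  have hsub : ball (0:ℂ) 1 ⊆ ball 0 R := ball_subset_ball (by linarith)
  have hf1' : DifferentiableOn ℂ f (ball 0 1) := hf.mono hsub
  -- the function D = f z / z
  set D : ℂ → ℂ := dslope f 0 with hDdef
  have hDd : DifferentiableOn ℂ D (ball 0 1) :=
    ((differentiableOn_dslope (ball_mem_nhds 0 (by norm_num))).mpr hf1')
  have hzD : ∀ z : ℂ, f z = z * D z := by
    intro z
    have h := sub_smul_dslope f 0 z
    rw [sub_zero, hf0, sub_zero, smul_eq_mul] at h
    rw [← h, hDdef]
  have hD0 : D 0 = 1 := by rw [hDdef, dslope_same, hf1]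
  have hDb : ∀ z ∈ ball (0:ℂ) 1, ‖D z‖ ≤ M := dslope_le hf1' hf0 hb
  -- Θ
  set Θ : ℂ → ℂ := fun z => ((M:ℂ)*(D z - 1))/((M:ℂ)^2 - D z) with hΘdef
  have hMball : ∀ z ∈ ball (0:ℂ) 1, (M:ℂ)^2 - D z ≠ 0 := by
    intro z hz h
    have h2 : ((M:ℂ))^2 = D z := by linear_combination h
    have h3 : ‖((M:ℂ))^2‖ ≤ M := h2 ▸ hDb z hz
    rw [norm_pow, Complex.norm_real, Real.norm_eq_abs, abs_of_pos (by linarith)] at h3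
    nlinarith
  have hΘdiff : DifferentiableOn ℂ Θ (ball 0 1) :=
    DifferentiableOn.div ((hDd.sub_const 1).const_mul _)
      ((differentiableOn_const _).sub hDd) hMball
  have hΘ0 : Θ 0 = 0 := by simp [hΘdef, hD0]
  have hΘb : ∀ z ∈ ball (0:ℂ) 1, ‖Θ z‖ ≤ 1 := by
    intro z hz
    rw [hΘdef]
    simp only []
    rw [norm_div]
    exact div_le_one_of_le₀ (theta_bound M hM (D z) (hDb z hz)) (norm_nonneg _)
  -- τ
  set τ : ℂ → ℂ := dslope Θ 0 with hτdef
  have hτdiff : DifferentiableOn ℂ τ (ball 0 1) :=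
    (differentiableOn_dslope (ball_mem_nhds 0 one_pos)).mpr hΘdiff
  have hτb : ∀ z ∈ ball (0:ℂ) 1, ‖τ z‖ ≤ 1 := dslope_le hΘdiff hΘ0 hΘb
  have hΘτ : ∀ z : ℂ, Θ z = z * τ z := by
    intro z
    have h := sub_smul_dslope Θ 0 z
    rw [sub_zero, hΘ0, sub_zero, smul_eq_mul] at h
    rw [← h, hτdef]
  -- main pointwise identity
  have hkey : ∀ z ∈ ball (0:ℂ) 1, (M:ℂ)*(f z - z) = z * τ z * ((M:ℂ)^2*z - f z) := by
    intro z hz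
    have h1 : (M:ℂ)^2*z - f z = z*((M:ℂ)^2 - D z) := by rw [hzD z]; ring
    rw [← hΘτ z, h1, hΘdef]
    simp only []
    rw [hzD z]
    field_simp [hMball z hz]
  -- bound on e = f z - z
  have hEb : ∀ z ∈ ball (0:ℂ) 1, ‖f z - z‖ * (M - ‖z‖) ≤ (M^2-1)*‖z‖^2 := by
    intro z hz
    have hz1 : ‖z‖ < 1 := mem_ball_zero_iff.1 hz
    have h1 : (M:ℂ)^2*z - f z = ((M^2-1:ℝ):ℂ)*z - (f z - z) := by push_cast; ring
    have h2 : ‖(M:ℂ)^2*z - f z‖ ≤ (M^2-1)*‖z‖ + ‖f z - z‖ := by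
      rw [h1]
      refine le_trans (norm_sub_le _ _) ?_
      rw [norm_mul, Complex.norm_real, Real.norm_eq_abs, abs_of_pos (by nlinarith)]
    have h3 : ‖(M:ℂ)*(f z - z)‖ = M * ‖f z - z‖ := by
      rw [norm_mul, Complex.norm_real, Real.norm_eq_abs, abs_of_pos (by linarith)]
    have h4 := hkey z hz
    have h5 : M * ‖f z - z‖ ≤ ‖z‖ * ((M^2-1)*‖z‖ + ‖f z - z‖) := by
      calc M * ‖f z - z‖ = ‖(M:ℂ)*(f z - z)‖ := h3.symm
        _ = ‖z * τ z * ((M:ℂ)^2*z - f z)‖ := by rw [h4]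
        _ = ‖z‖ * ‖τ z‖ * ‖(M:ℂ)^2*z - f z‖ := by rw [norm_mul, norm_mul]
        _ ≤ ‖z‖ * 1 * ((M^2-1)*‖z‖ + ‖f z - z‖) := by
            apply mul_le_mul (by
              exact mul_le_mul_of_nonneg_left (hτb z hz) (norm_nonneg z)) h2 (norm_nonneg _)
              (by positivity)
        _ = ‖z‖ * ((M^2-1)*‖z‖ + ‖f z - z‖) := by ring
    nlinarith [norm_nonneg (f z - z), norm_nonneg z]
  -- derivative identity
  have hDI : ∀ z ∈ ball (0:ℂ) 1,
      (deriv f z - 1) * ((M:ℂ) + z * τ z)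
        = (τ z + z * deriv τ z)*((M:ℂ)^2*z - f z) + z*τ z*((M:ℂ)^2-1) := by
    intro z hz
    have hfz : HasDerivAt f (deriv f z) z :=
      (hf.differentiableAt (isOpen_ball.mem_nhds (hsub hz))).hasDerivAt
    have hτz : HasDerivAt τ (deriv τ z) z :=
      (hτdiff.differentiableAt (isOpen_ball.mem_nhds hz)).hasDerivAt
    have hL : HasDerivAt (fun w => (M:ℂ)*(f w - w)) ((M:ℂ)*(deriv f z - 1)) z :=
      ((hfz.sub (hasDerivAt_id z)).const_mul (M:ℂ))
    have hp1 : HasDerivAt (fun w => w * τ w) (τ z + z * deriv τ z) z := by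
      have h := (hasDerivAt_id z).mul hτz
      simp only [one_mul, id_eq] at h
      exact h
    have hp2 : HasDerivAt (fun w => (M:ℂ)^2*w - f w) ((M:ℂ)^2 - deriv f z) z := by
      have h := (((hasDerivAt_id z).const_mul ((M:ℂ)^2)).sub hfz)
      simp only [mul_one] at h
      exact h
    have hRHS : HasDerivAt (fun w => w * τ w * ((M:ℂ)^2*w - f w))
        ((τ z + z * deriv τ z)*((M:ℂ)^2*z - f z) + (z * τ z)*((M:ℂ)^2 - deriv f z)) z :=
      hp1.mul hp2
    have heq : (fun w => (M:ℂ)*(f w - w)) =ᶠ[nhds z] (fun w => w * τ w * ((M:ℂ)^2*w - f w)) := by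
      filter_upwards [isOpen_ball.mem_nhds hz] with w hw
      exact hkey w hw
    have hL2 : HasDerivAt (fun w => (M:ℂ)*(f w - w))
        ((τ z + z * deriv τ z)*((M:ℂ)^2*z - f z) + (z * τ z)*((M:ℂ)^2 - deriv f z)) z :=
      hRHS.congr_of_eventuallyEq heq
    have huniq := hL.unique hL2
    linear_combination huniq
  -- pointwise derivative bound
  have hEd : ∀ z : ℂ, ‖z‖ < 1 → 2*M*‖z‖ ≤ ‖z‖^2 + 1 →
      ‖deriv f z - 1‖ ≤ (M^2-1)*‖z‖*(2*M-‖z‖)/(M-‖z‖)^2 := by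
    intro z hz1 hq
    have hz : z ∈ ball (0:ℂ) 1 := mem_ball_zero_iff.2 hz1
    set t := ‖z‖
    set u := ‖τ z‖
    have hMt : (0:ℝ) < M - t := by simp only [t]; nlinarith
    apply landau_real_core M t u _ (‖deriv τ z‖) (‖(M:ℂ)^2*z - f z‖) hM (norm_nonneg z) hz1 hq
      (norm_nonneg _) (hτb z hz) (norm_nonneg _) (schwarz_pick hτdiff hτb hz) (norm_nonneg _)
    · -- hN
      have h1 : (M:ℂ)^2*z - f z = ((M^2-1:ℝ):ℂ)*z - (f z - z) := by push_cast; ring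
      have h2 : ‖(M:ℂ)^2*z - f z‖ ≤ (M^2-1)*t + ‖f z - z‖ := by
        rw [h1]
        refine le_trans (norm_sub_le _ _) ?_
        rw [norm_mul, Complex.norm_real, Real.norm_eq_abs, abs_of_pos (by nlinarith)]
      have h3 := hEb z hz
      rw [le_div_iff₀ hMt]
      nlinarith [norm_nonneg (f z - z)]
    · exact norm_nonneg _
    · -- hE
      have hid := hDI z hz
      have h1 : M - t*u ≤ ‖(M:ℂ) + z * τ z‖ := by
        have h2 : ‖(M:ℂ)‖ - ‖-(z * τ z)‖ ≤ ‖(M:ℂ) - (-(z * τ z))‖ := norm_sub_norm_le _ _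
        rw [norm_neg, sub_neg_eq_add, norm_mul] at h2
        rw [Complex.norm_real, Real.norm_eq_abs, abs_of_pos (by linarith)] at h2
        exact h2
      have h2 : ‖deriv f z - 1‖ * (M - t*u) ≤ ‖(deriv f z - 1) * ((M:ℂ) + z * τ z)‖ := by
        rw [norm_mul]
        rcases le_or_gt 0 (M - t*u) with h | h
        · exact mul_le_mul_of_nonneg_left h1 (norm_nonneg _)
        · nlinarith [norm_nonneg (deriv f z - 1), norm_nonneg ((M:ℂ) + z * τ z),
            mul_nonneg (norm_nonneg (deriv f z - 1)) (norm_nonneg ((M:ℂ) + z * τ z))]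
      rw [hid] at h2
      refine le_trans h2 (le_trans (norm_add_le _ _) ?_)
      have h3 : ‖(τ z + z * deriv τ z)*((M:ℂ)^2*z - f z)‖
          ≤ (u + t*‖deriv τ z‖) * ‖(M:ℂ)^2*z - f z‖ := by
        rw [norm_mul]
        apply mul_le_mul_of_nonneg_right _ (norm_nonneg _)
        refine le_trans (norm_add_le _ _) ?_
        rw [norm_mul]
      have h4 : ‖z*τ z*((M:ℂ)^2-1)‖ ≤ t*u*(M^2-1) := by
        rw [norm_mul, norm_mul]
        have : ((M:ℂ)^2 - 1) = ((M^2-1:ℝ):ℂ) := by push_cast; ring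
        rw [this, Complex.norm_real, Real.norm_eq_abs, abs_of_pos (by nlinarith)]
      linarith
  -- convenience facts
  have hqt : ∀ t : ℝ, 0 ≤ t → t ≤ ρ → 2*M*t ≤ t^2+1 := fun t h0 h1 => aux_qt M ρ t hρM hρid h0 h1
  have hkmono := fun (t T : ℝ) (h0 : 0 ≤ t) (h1 : t ≤ T) (h2 : T < 1) => aux_kmono M t T hM h0 h1 h2
  have hklt1 := fun (T : ℝ) (h0 : 0 ≤ T) (h1 : T < ρ) => aux_klt1 M ρ T hM hρM hρid h0 h1
  have hk0 := fun (T : ℝ) (h0 : 0 ≤ T) (h1 : T < ρ) => aux_k0 M T hM h0 (lt_trans h1 hρ1)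
  -- derivative bound on closed balls
  have hder : ∀ T : ℝ, 0 ≤ T → T < ρ → ∀ w ∈ closedBall (0:ℂ) T,
      ‖deriv f w - 1‖ ≤ (M^2-1)*T*(2*M-T)/(M-T)^2 := by
    intro T h0 h1 w hw
    rw [mem_closedBall, dist_zero_right] at hw
    have hw1 : ‖w‖ < 1 := lt_of_le_of_lt hw (lt_trans h1 hρ1)
    refine le_trans (hEd w hw1 (hqt _ (norm_nonneg w) (le_trans hw h1.le))) ?_
    exact hkmono _ _ (norm_nonneg w) hw (lt_trans h1 hρ1)
  -- Lipschitz estimate for e = f - id on closed balls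
  have hlip : ∀ T : ℝ, 0 ≤ T → T < ρ → ∀ x ∈ closedBall (0:ℂ) T, ∀ y ∈ closedBall (0:ℂ) T,
      ‖(f x - x) - (f y - y)‖ ≤ ((M^2-1)*T*(2*M-T)/(M-T)^2) * ‖x - y‖ := by
    intro T h0 h1 x hx y hy
    have hsub2 : closedBall (0:ℂ) T ⊆ ball 0 R := fun w hw => by
      rw [mem_closedBall, dist_zero_right] at hw
      rw [mem_ball, dist_zero_right]
      have : ρ < 1 := hρ1
      linarith
    have hdiffat : ∀ w ∈ closedBall (0:ℂ) T, DifferentiableAt ℂ (fun v => f v - v) w := by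
      intro w hw
      exact (hf.differentiableAt (isOpen_ball.mem_nhds (hsub2 hw))).sub differentiableAt_id
    refine Convex.norm_image_sub_le_of_norm_fderiv_le hdiffat ?_ (convex_closedBall _ _) hy hx
    intro w hw
    have hF : HasDerivAt (fun v => f v - v) (deriv f w - 1) w :=
      (hf.differentiableAt (isOpen_ball.mem_nhds (hsub2 hw))).hasDerivAt.sub (hasDerivAt_id w)
    rw [hF.hasFDerivAt.fderiv, ContinuousLinearMap.norm_toSpanSingleton]
    exact hder T h0 h1 w hw
  constructor
  · -- injectivity
    intro z₁ hz₁ z₂ hz₂ hfe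
    rw [mem_ball, dist_zero_right] at hz₁ hz₂
    set T := max ‖z₁‖ ‖z₂‖ with hT
    have hT0 : 0 ≤ T := le_trans (norm_nonneg z₁) (le_max_left _ _)
    have hTρ : T < ρ := max_lt hz₁ hz₂
    have h1 : z₁ ∈ closedBall (0:ℂ) T := by
      rw [mem_closedBall, dist_zero_right]; exact le_max_left _ _
    have h2 : z₂ ∈ closedBall (0:ℂ) T := by
      rw [mem_closedBall, dist_zero_right]; exact le_max_right _ _
    have h3 := hlip T hT0 hTρ z₁ h1 z₂ h2
    rw [hfe] at h3
    have h4 : ‖(f z₂ - z₁) - (f z₂ - z₂)‖ = ‖z₁ - z₂‖ := by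
      rw [show (f z₂ - z₁) - (f z₂ - z₂) = -(z₁ - z₂) by ring, norm_neg]
    rw [h4] at h3
    have h5 := hklt1 T hT0 hTρ
    by_contra hne
    have h6 : 0 < ‖z₁ - z₂‖ := by
      rw [norm_pos_iff, sub_ne_zero]; exact hne
    nlinarith
  · -- covering
    intro c hc
    rw [mem_ball, dist_zero_right] at hc
    -- find radius T with h T = ‖c‖
    have hMρ : 0 < M - ρ := by linarith
    have hcont : ContinuousOn (fun x : ℝ => M*x*(1-M*x)/(M-x)) (Icc 0 ρ) := by
      apply ContinuousOn.div
      · exact ((continuousOn_const.mul continuousOn_id).mul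
          (continuousOn_const.sub (continuousOn_const.mul continuousOn_id)))
      · exact continuousOn_const.sub continuousOn_id
      · intro x hx
        rw [mem_Icc] at hx
        intro hcontra
        have : x = M := by linarith [sub_eq_zero.1 hcontra]
        nlinarith [hx.2]
    have hIVT := intermediate_value_Icc hρpos.le hcont
    have hval0 : (fun x : ℝ => M*x*(1-M*x)/(M-x)) 0 = 0 := by simp
    have hvalρ : (fun x : ℝ => M*x*(1-M*x)/(M-x)) ρ = M * ρ^2 := by
      simp only []
      rw [show M*ρ*(1-M*ρ) = M*ρ^2*(M-ρ) by nlinarith [hρid], mul_div_assoc,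
        div_self (by linarith : M - ρ ≠ 0), mul_one]
    have hmem : ‖c‖ ∈ Icc ((fun x : ℝ => M*x*(1-M*x)/(M-x)) 0) ((fun x : ℝ => M*x*(1-M*x)/(M-x)) ρ) := by
      rw [hval0, hvalρ]
      exact ⟨norm_nonneg c, hc.le⟩
    obtain ⟨T, hTmem, hTval⟩ := hIVT hmem
    rw [mem_Icc] at hTmem
    obtain ⟨hT0, hTρ'⟩ := hTmem
    have hTρ : T < ρ := by
      rcases lt_or_eq_of_le hTρ' with h | h
      · exact h
      · exfalso
        rw [h] at hTval
        rw [hvalρ] at hTval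
        rw [hTval] at hc
        exact lt_irrefl _ hc
    have hMT : (0:ℝ) < M - T := by nlinarith
    -- the contraction map
    set g : ℂ → ℂ := fun w => c - (f w - w) with hgdef
    have hgmaps : MapsTo g (closedBall (0:ℂ) T) (closedBall (0:ℂ) T) := by
      intro w hw
      rw [mem_closedBall, dist_zero_right] at hw ⊢
      have hw1 : ‖w‖ < 1 := lt_of_le_of_lt hw (lt_trans hTρ hρ1)
      have he := hEb w (mem_ball_zero_iff.2 hw1)
      have hMw : (0:ℝ) < M - ‖w‖ := by nlinarith
      have he2 : ‖f w - w‖ ≤ (M^2-1)*T^2/(M-T) := by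
        rw [le_div_iff₀ hMT]
        have e1 : ‖f w - w‖*(M-T) ≤ ‖f w - w‖*(M-‖w‖) :=
          mul_le_mul_of_nonneg_left (by linarith) (norm_nonneg _)
        have e2 : (M^2-1)*‖w‖^2 ≤ (M^2-1)*T^2 :=
          mul_le_mul_of_nonneg_left (by nlinarith [norm_nonneg w]) (by nlinarith)
        linarith
      have hgw : ‖g w‖ ≤ ‖c‖ + ‖f w - w‖ := by
        rw [hgdef]
        exact norm_sub_le _ _
      have hceq : ‖c‖ = M*T*(1-M*T)/(M-T) := hTval.symm
      have hfinal : M*T*(1-M*T)/(M-T) + (M^2-1)*T^2/(M-T) = T := by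
        field_simp
        ring
      linarith
    set K : NNReal := Real.toNNReal ((M^2-1)*T*(2*M-T)/(M-T)^2) with hKdef
    have hK1 : K < 1 := by
      rw [← NNReal.coe_lt_coe, hKdef, Real.coe_toNNReal _ (hk0 T hT0 hTρ), NNReal.coe_one]
      exact hklt1 T hT0 hTρ
    have hglip : LipschitzOnWith K g (closedBall (0:ℂ) T) := by
      apply LipschitzOnWith.of_dist_le_mul
      intro x hx y hy
      rw [dist_eq_norm, dist_eq_norm, hgdef]
      have h1 : (fun w => c - (f w - w)) x - (fun w => c - (f w - w)) y
          = -((f x - x) - (f y - y)) := by simp only []; ring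
      rw [h1, norm_neg]
      have h2 := hlip T hT0 hTρ x hx y hy
      rw [hKdef, Real.coe_toNNReal _ (hk0 T hT0 hTρ)]
      exact h2
    have hcontr : ContractingWith K (hgmaps.restrict g _ _) :=
      ⟨hK1, hglip.to_restrict⟩
    obtain ⟨y, hyball, hyfix, -⟩ := ContractingWith.exists_fixedPoint'
      (isClosed_closedBall.isComplete) hgmaps hcontr (mem_closedBall_self hT0) (edist_ne_top _ _)
    refine ⟨y, ?_, ?_⟩
    · rw [mem_ball, dist_zero_right]
      rw [mem_closedBall, dist_zero_right] at hyball
      linarith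
    · have : g y = y := hyfix
      rw [hgdef] at this
      simp only [] at this
      linear_combination -this


lemma two_mul_lt_log (r : ℝ) (h0 : 0 < r) (h1 : r < 1) :
    2*r < Real.log ((1+r)/(1-r)) := by
  have hp1 : (0:ℝ) < 1 + r := by linarith
  have hp2 : (0:ℝ) < 1 - r := by linarith
  rw [Real.log_div hp1.ne' hp2.ne']
  set G : ℝ → ℝ := fun x => Real.log (1+x) - Real.log (1-x) - 2*x with hGdef
  have hcont : ContinuousOn G (Icc 0 r) := by
    apply ContinuousOn.sub
    apply ContinuousOn.sub
    · exact ContinuousOn.log (continuousOn_const.add continuousOn_id)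
        (fun x hx => by rw [mem_Icc] at hx; intro h; linarith [hx.1])
    · exact ContinuousOn.log (continuousOn_const.sub continuousOn_id)
        (fun x hx => by rw [mem_Icc] at hx; intro h; linarith [hx.2])
    · exact continuousOn_const.mul continuousOn_id
  have hmono : StrictMonoOn G (Icc 0 r) := by
    apply strictMonoOn_of_deriv_pos (convex_Icc 0 r) hcont
    intro x hx
    rw [interior_Icc, mem_Ioo] at hx
    have hx1 : (0:ℝ) < 1 + x := by linarith
    have hx2 : (0:ℝ) < 1 - x := by linarith
    have hG : HasDerivAt G (1/(1+x) - (-1)/(1-x) - 2) x := by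
      have d1 : HasDerivAt (fun y : ℝ => 1 + y) 1 x := by
        simpa using (hasDerivAt_id x).const_add 1
      have d2 : HasDerivAt (fun y : ℝ => 1 - y) (-1) x := by
        simpa using (hasDerivAt_id x).const_sub 1
      have l1 := d1.log hx1.ne'
      have l2 := d2.log hx2.ne'
      have l3 : HasDerivAt (fun y : ℝ => 2*y) 2 x := by
        simpa using (hasDerivAt_id x).const_mul (2:ℝ)
      exact (l1.sub l2).sub l3
    rw [hG.deriv]
    have e1 : 1 - x < 1/(1+x) := by rw [lt_div_iff₀ hx1]; nlinarith
    have e2 : 1 + x < 1/(1-x) := by rw [lt_div_iff₀ hx2]; nlinarith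
    have : (-1:ℝ)/(1-x) = -(1/(1-x)) := by ring
    rw [this]
    linarith
  have h00 : G 0 = 0 := by simp [hGdef]
  have := hmono (left_mem_Icc.2 h0.le) (right_mem_Icc.2 h0.le) h0
  rw [h00, hGdef] at this
  simp only [] at this
  linarith

theorem stmt_15 (F : ℂ → ℂ) (hF : DifferentiableOn ℂ F (ball 0 1))
    (h0 : F 0 = 0) (hd : deriv F 0 = 1)
    (r : ℝ) (hr0 : 0 < r) (hr1 : r < 1)
    (M : ℝ) (hM : M = (1 / 2) * Real.log ((1 + r) / (1 - r))) (hMr : r ≤ M)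
    (hbd : ∀ z : ℂ, ‖z‖ ≤ r → ‖F z‖ ≤ M) :
    InjOn F (ball 0 (M - Real.sqrt (M ^ 2 - r ^ 2))) ∧
      ball (0 : ℂ) (M * (M - Real.sqrt (M ^ 2 - r ^ 2)) ^ 2 / r ^ 2) ⊆
        F '' ball 0 (M - Real.sqrt (M ^ 2 - r ^ 2)) := by
  have hrM : r < M := by
    have := two_mul_lt_log r hr0 hr1
    rw [hM]; linarith
  have hrC : ((r:ℝ):ℂ) ≠ 0 := by
    simpa using hr0.ne'
  have hnr : ‖((r:ℝ):ℂ)‖ = r := by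
    rw [Complex.norm_real, Real.norm_eq_abs, abs_of_pos hr0]
  -- scaled function
  set f : ℂ → ℂ := fun w => F ((r:ℂ)*w) / (r:ℂ) with hfdef
  have hmapsin : ∀ w : ℂ, w ∈ ball (0:ℂ) (1/r) → (r:ℂ)*w ∈ ball (0:ℂ) 1 := by
    intro w hw
    rw [mem_ball_zero_iff] at hw ⊢
    rw [norm_mul, hnr]
    rw [lt_div_iff₀ hr0] at hw
    linarith [hw]
  have hfd : DifferentiableOn ℂ f (ball 0 (1/r)) := by
    apply DifferentiableOn.div_const
    exact hF.comp (differentiableOn_const _ |>.mul differentiableOn_id) hmapsin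
  have hf0 : f 0 = 0 := by simp [hfdef, h0]
  have hf1 : deriv f 0 = 1 := by
    have hFd : HasDerivAt F 1 0 := by
      have hmem : (0:ℂ) ∈ ball (0:ℂ) 1 := by simp
      have := (hF.differentiableAt (isOpen_ball.mem_nhds hmem)).hasDerivAt
      rwa [hd] at this
    have hin : HasDerivAt (fun w : ℂ => (r:ℂ)*w) (r:ℂ) 0 := by
      simpa using (hasDerivAt_id (0:ℂ)).const_mul ((r:ℂ))
    have hFd' : HasDerivAt F 1 ((fun w : ℂ => (r:ℂ)*w) 0) := by
      simpa using hFd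
    have hcomp : HasDerivAt (fun w : ℂ => F ((r:ℂ)*w)) (1*(r:ℂ)) 0 :=
      HasDerivAt.comp 0 hFd' hin
    have : HasDerivAt f ((1*(r:ℂ))/(r:ℂ)) 0 := hcomp.div_const _
    rw [this.deriv]
    field_simp
  have hbnd : ∀ w ∈ ball (0:ℂ) 1, ‖f w‖ ≤ M/r := by
    intro w hw
    rw [mem_ball_zero_iff] at hw
    rw [hfdef]
    simp only []
    rw [norm_div, hnr, div_le_div_iff_of_pos_right hr0]
    apply hbd
    rw [norm_mul, hnr]
    nlinarith [norm_nonneg w]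
  have hR : 1 < 1/r := by rw [lt_div_iff₀ hr0]; linarith
  have h𝕄 : 1 < M/r := by rw [lt_div_iff₀ hr0]; linarith
  obtain ⟨hinj, hcov⟩ := landau_core f (1/r) (M/r) hR hfd hf0 hf1 h𝕄 hbnd
  -- radius relation
  have hsqrel : Real.sqrt (M^2 - r^2) = r * Real.sqrt ((M/r)^2 - 1) := by
    rw [← Real.sqrt_sq hr0.le, ← Real.sqrt_mul (sq_nonneg r)]
    congr 1
    field_simp
    rw [Real.sqrt_sq hr0.le]
  set ρc : ℝ := M/r - Real.sqrt ((M/r)^2-1) with hρcdef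
  have hρrel : M - Real.sqrt (M^2 - r^2) = r * ρc := by
    rw [hsqrel, hρcdef]; field_simp
  have hρcpos : 0 < ρc := by
    have hs2 : Real.sqrt ((M/r)^2-1) ^ 2 = (M/r)^2 - 1 := Real.sq_sqrt (by nlinarith)
    have hs0 : 0 ≤ Real.sqrt ((M/r)^2-1) := Real.sqrt_nonneg _
    rw [hρcdef]
    nlinarith
  constructor
  · -- injectivity
    intro z₁ hz₁ z₂ hz₂ heq
    rw [mem_ball_zero_iff, hρrel] at hz₁ hz₂
    have hw₁ : z₁/(r:ℂ) ∈ ball (0:ℂ) ρc := by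
      rw [mem_ball_zero_iff, norm_div, hnr, div_lt_iff₀ hr0]
      linarith [hz₁]
    have hw₂ : z₂/(r:ℂ) ∈ ball (0:ℂ) ρc := by
      rw [mem_ball_zero_iff, norm_div, hnr, div_lt_iff₀ hr0]
      linarith [hz₂]
    have hfeq : f (z₁/(r:ℂ)) = f (z₂/(r:ℂ)) := by
      rw [hfdef]
      simp only []
      rw [mul_div_cancel₀ _ hrC, mul_div_cancel₀ _ hrC, heq]
    have := hinj hw₁ hw₂ hfeq
    have h2 : (r:ℂ) * (z₁/(r:ℂ)) = (r:ℂ) * (z₂/(r:ℂ)) := by rw [this]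
    rwa [mul_div_cancel₀ _ hrC, mul_div_cancel₀ _ hrC] at h2
  · -- covering
    intro c hc
    rw [mem_ball_zero_iff] at hc
    have hcball : c/(r:ℂ) ∈ ball (0:ℂ) ((M/r) * ρc^2) := by
      rw [mem_ball_zero_iff, norm_div, hnr, div_lt_iff₀ hr0]
      rw [hρrel] at hc
      have : M * (r*ρc)^2 / r^2 = M * ρc^2 := by field_simp
      rw [this] at hc
      calc ‖c‖ < M * ρc^2 := hc
        _ = M/r * ρc^2 * r := by field_simp
    obtain ⟨w, hwball, hwval⟩ := hcov hcball
    refine ⟨(r:ℂ)*w, ?_, ?_⟩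
    · rw [mem_ball_zero_iff, norm_mul, hnr, hρrel]
      rw [mem_ball_zero_iff] at hwball
      exact (mul_lt_mul_iff_right₀ hr0).2 hwball
    · have : F ((r:ℂ)*w) / (r:ℂ) = c / (r:ℂ) := hwval
      field_simp at this
      exact this
end

section
/- Let f be a slice regular function on the open quaternionic unit ball 𝔹 given by a power series f(q) = Σ qⁿ aₙ with quaternion coefficients aₙ, converging on 𝔹, with f(0) = 0 and |f′(q)| ≤ 1/(1 − |q|²) for all q ∈ 𝔹, where f′(q) = Σ qⁿ⁻¹ n aₙ. Then for all q ∈ 𝔹, |f(q)| ≤ (1/2)·log((1 + |q|)/(1 − |q|)). -/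
/-!
On the real segment `t ↦ t • q`, `f` becomes a power series in the real variable `t` with
coefficients `qⁿ aₙ`; since real scalars commute with `q`, its derivative is `q f′(t q)`.
Hence `‖d/dt f(t q)‖ ≤ |q| / (1 - t²|q|²) = d/dt artanh (t |q|)`, and the mean value inequality
together with `f 0 = 0` gives `|f q| ≤ artanh |q| = ½ log ((1 + |q|) / (1 - |q|))`.
-/

open Metric Set

namespace Real

theorem hasDerivAt_artanh {x : ℝ} (hx : x ∈ Ioo (-1) 1) :
    HasDerivAt artanh (1 / (1 - x ^ 2)) x := by
  have h₁ : 0 < 1 + x := by linarith [hx.1]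
  have h₂ : 0 < 1 - x := by linarith [hx.2]
  have hlog := ((((hasDerivAt_id x).const_add 1).log h₁.ne').sub
    (((hasDerivAt_id x).const_sub 1).log h₂.ne')).const_mul (1 / 2 : ℝ)
  refine (hlog.congr_deriv ?_).congr_of_eventuallyEq ?_
  · have h₃ : 1 - x ^ 2 ≠ 0 := by nlinarith
    simp only [id]
    field_simp
    ring
  · filter_upwards [isOpen_Ioo.mem_nhds hx] with y hy
    rw [artanh_eq_half_log (Ioo_subset_Icc_self hy),
      log_div (by linarith [hy.1]) (by linarith [hy.2])]
    rfl

end Real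

section PowerSeries

variable {𝕜 E : Type*} [RCLike 𝕜] [NormedAddCommGroup E] [NormedSpace 𝕜 E]

theorem exists_norm_mul_pow_le_of_summable {c : ℕ → E} {x : 𝕜}
    (h : Summable fun n => x ^ n • c n) : ∃ C, ∀ n, ‖c n‖ * ‖x‖ ^ n ≤ C := by
  obtain ⟨C, hC⟩ := h.tendsto_atTop_zero.norm.bddAbove_range
  exact ⟨C, fun n => by simpa [norm_smul, mul_comm] using hC ⟨n, rfl⟩⟩

theorem exists_summable_norm_deriv_pow_smul_le {c : ℕ → E} {ρ r : ℝ} (hρ : 0 < ρ) (hρr : ρ < r)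
    (hc : Summable fun n => (r : 𝕜) ^ n • c n) :
    ∃ u : ℕ → ℝ, Summable u ∧
      ∀ (n : ℕ) (x : 𝕜), ‖x‖ ≤ ρ → ‖((n : 𝕜) * x ^ (n - 1)) • c n‖ ≤ u n := by
  have hr : 0 < r := hρ.trans hρr
  obtain ⟨C, hC⟩ := exists_norm_mul_pow_le_of_summable hc
  refine ⟨fun n => C / ρ * (n * (ρ / r) ^ n), ?_, ?_⟩
  · have hρr' : ‖ρ / r‖ < 1 := by
      rw [Real.norm_of_nonneg (by positivity)]
      exact (div_lt_one hr).2 hρr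
    simpa using (summable_pow_mul_geometric_of_norm_lt_one 1 hρr').mul_left (C / ρ)
  rintro (_ | n) x hx
  · simp
  have hcn : ‖c (n + 1)‖ ≤ C / r ^ (n + 1) := by
    simpa [le_div_iff₀ (pow_pos hr _), abs_of_pos hr] using hC (n + 1)
  calc ‖(((n + 1 : ℕ) : 𝕜) * x ^ (n + 1 - 1)) • c (n + 1)‖
      = (n + 1) * ‖x‖ ^ n * ‖c (n + 1)‖ := by
        rw [norm_smul, norm_mul, norm_pow, RCLike.norm_natCast, Nat.add_sub_cancel]
        push_cast; ring
    _ ≤ (n + 1) * ρ ^ n * (C / r ^ (n + 1)) := by gcongr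
    _ = C / ρ * ((n + 1 : ℕ) * (ρ / r) ^ (n + 1)) := by
        have := hr.ne'
        rw [div_pow]; push_cast; field_simp; ring

theorem hasDerivAt_tsum_pow_smul [CompleteSpace E] {c : ℕ → E} {R : ℝ}
    (hc : ∀ x : 𝕜, ‖x‖ < R → Summable fun n => x ^ n • c n) {t : 𝕜} (ht : ‖t‖ < R) :
    HasDerivAt (fun x => ∑' n, x ^ n • c n) (∑' n, t ^ n • ((n + 1) • c (n + 1))) t := by
  obtain ⟨ρ, htρ, hρR⟩ := exists_between ht
  obtain ⟨r, hρr, hrR⟩ := exists_between hρR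
  have hρ : 0 < ρ := (norm_nonneg t).trans_lt htρ
  obtain ⟨u, hu, hu_bound⟩ := exists_summable_norm_deriv_pow_smul_le hρ hρr
    (hc (r : 𝕜) (by simpa [abs_of_pos (hρ.trans hρr)]))
  have hderiv := hasDerivAt_tsum_of_isPreconnected hu isOpen_ball (convex_ball _ _).isPreconnected
    (fun n x _ => (hasDerivAt_pow n x).smul_const (c n))
    (fun n x hx => hu_bound n x (mem_ball_zero_iff.1 hx).le) (mem_ball_self hρ)
    (hc 0 (by simpa using hρ.trans hρR)) (mem_ball_zero_iff.2 htρ)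
  have hsum := Summable.of_norm_bounded hu fun n => hu_bound n t htρ.le
  have hshift :
      ∑' n : ℕ, ((n : 𝕜) * t ^ (n - 1)) • c n = ∑' n, t ^ n • ((n + 1) • c (n + 1)) := by
    rw [hsum.tsum_eq_zero_add, Nat.cast_zero, zero_mul, zero_smul, zero_add]
    congr 1 with n
    rw [Nat.add_sub_cancel, mul_smul, smul_comm, Nat.cast_smul_eq_nsmul]
  exact hshift ▸ hderiv

theorem hasDerivAt_of_hasSum_pow_smul [CompleteSpace E] {f : 𝕜 → E} {c : ℕ → E} {R : ℝ}
    (hf : ∀ x : 𝕜, ‖x‖ < R → HasSum (fun n => x ^ n • c n) (f x)) {t : 𝕜} (ht : ‖t‖ < R)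
    {d : E} (hd : HasSum (fun n => t ^ n • ((n + 1) • c (n + 1))) d) : HasDerivAt f d t := by
  have hderiv := hasDerivAt_tsum_pow_smul (fun x hx => (hf x hx).summable) ht
  rw [hd.tsum_eq] at hderiv
  refine hderiv.congr_of_eventuallyEq ?_
  filter_upwards [isOpen_ball.mem_nhds (mem_ball_zero_iff.2 ht)] with x hx
  exact (hf x (mem_ball_zero_iff.1 hx)).tsum_eq.symm

end PowerSeries

theorem hasDerivAt_comp_smul_of_hasSum {A : Type*} [NormedRing A] [NormedAlgebra ℝ A]
    [CompleteSpace A] {f f' : A → A} {a : ℕ → A}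
    (hf : ∀ q : A, ‖q‖ < 1 → HasSum (fun n => q ^ n * a n) (f q))
    (hf' : ∀ q : A, ‖q‖ < 1 → HasSum (fun n => q ^ n * (((n + 1 : ℕ) : ℝ) • a (n + 1))) (f' q))
    {q : A} {t : ℝ} (ht : ‖t • q‖ < 1) :
    HasDerivAt (fun x : ℝ => f (x • q)) (q * f' (t • q)) t := by
  obtain ⟨R, htR, hR⟩ : ∃ R, ‖t‖ < R ∧ ∀ x : ℝ, ‖x‖ < R → ‖x • q‖ < 1 := by
    rcases eq_or_ne q 0 with rfl | hq
    · exact ⟨‖t‖ + 1, by linarith, by simp⟩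
    · have hq' : 0 < ‖q‖ := norm_pos_iff.2 hq
      refine ⟨‖q‖⁻¹, ?_, fun x hx => ?_⟩
      · rwa [← one_div, lt_div_iff₀ hq', ← norm_smul]
      · rwa [← one_div, lt_div_iff₀ hq', ← norm_smul] at hx
  refine hasDerivAt_of_hasSum_pow_smul (c := fun n => q ^ n * a n) (fun x hx => ?_) htR ?_
  · simpa only [smul_pow, smul_mul_assoc] using hf (x • q) (hR x hx)
  · have hterm : ∀ n : ℕ, q * ((t • q) ^ n * (((n + 1 : ℕ) : ℝ) • a (n + 1))) =
        t ^ n • ((n + 1) • (q ^ (n + 1) * a (n + 1))) := fun n => by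
      rw [smul_pow, smul_mul_assoc, mul_smul_comm, mul_smul_comm, mul_smul_comm, ← mul_assoc,
        ← pow_succ', Nat.cast_smul_eq_nsmul]
    simpa only [hterm] using (hf' (t • q) ht).mul_left q

theorem norm_le_artanh_of_norm_deriv_le {E : Type*} [NormedAddCommGroup E] [NormedSpace ℝ E]
    {φ φ' : ℝ → E} {s : ℝ} (hs₀ : 0 ≤ s) (hs₁ : s < 1) (h0 : φ 0 = 0)
    (hφ : ∀ t ∈ Icc (0 : ℝ) 1, HasDerivAt φ (φ' t) t)
    (hφ' : ∀ t ∈ Ico (0 : ℝ) 1, ‖φ' t‖ ≤ s / (1 - (t * s) ^ 2)) : ‖φ 1‖ ≤ Real.artanh s := by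
  have hB : ∀ t ∈ Icc (0 : ℝ) 1,
      HasDerivAt (fun t => Real.artanh (t * s)) (1 / (1 - (t * s) ^ 2) * s) t := by
    intro t ht
    have hts : t * s ∈ Ioo (-1) 1 := ⟨by nlinarith [ht.1], by nlinarith [ht.2]⟩
    exact ((Real.hasDerivAt_artanh hts).comp t ((hasDerivAt_id' t).mul_const s)).congr_deriv
      (by rw [one_mul])
  simpa using image_norm_le_of_norm_deriv_right_le_deriv_boundary'
    (B := fun t => Real.artanh (t * s))
    (fun t ht => (hφ t ht).continuousAt.continuousWithinAt)
    (fun t ht => (hφ t (Ico_subset_Icc_self ht)).hasDerivWithinAt) (by simp [h0])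
    (fun t ht => (hB t ht).continuousAt.continuousWithinAt)
    (fun t ht => (hB t (Ico_subset_Icc_self ht)).hasDerivWithinAt)
    (fun t ht => (hφ' t ht).trans_eq (by ring)) (right_mem_Icc.2 zero_le_one)

theorem stmt_16 (f f' : Quaternion ℝ → Quaternion ℝ) (a : ℕ → Quaternion ℝ)
    (hf : ∀ q : Quaternion ℝ, ‖q‖ < 1 → HasSum (fun n => q ^ n * a n) (f q))
    (hf' : ∀ q : Quaternion ℝ, ‖q‖ < 1 →
      HasSum (fun n => q ^ n * (((n + 1 : ℕ) : ℝ) • a (n + 1))) (f' q))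
    (h0 : f 0 = 0)
    (hbd : ∀ q : Quaternion ℝ, ‖q‖ < 1 → ‖f' q‖ ≤ 1 / (1 - ‖q‖ ^ 2)) :
    ∀ q : Quaternion ℝ, ‖q‖ < 1 →
      ‖f q‖ ≤ (1 / 2) * Real.log ((1 + ‖q‖) / (1 - ‖q‖)) := by
  intro q hq
  have hnorm : ∀ t ∈ Icc (0 : ℝ) 1, ‖t • q‖ = t * ‖q‖ := fun t ht => by
    rw [norm_smul, Real.norm_of_nonneg ht.1]
  have hball : ∀ t ∈ Icc (0 : ℝ) 1, ‖t • q‖ < 1 := fun t ht => by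
    rw [hnorm t ht]; nlinarith [ht.2, norm_nonneg q]
  have hφ' : ∀ t ∈ Ico (0 : ℝ) 1, ‖q * f' (t • q)‖ ≤ ‖q‖ / (1 - (t * ‖q‖) ^ 2) := by
    intro t ht
    have ht' := Ico_subset_Icc_self ht
    calc ‖q * f' (t • q)‖ ≤ ‖q‖ * ‖f' (t • q)‖ := norm_mul_le _ _
      _ ≤ ‖q‖ * (1 / (1 - ‖t • q‖ ^ 2)) := by gcongr; exact hbd _ (hball t ht')
      _ = ‖q‖ / (1 - (t * ‖q‖) ^ 2) := by rw [hnorm t ht', mul_one_div]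
  have := norm_le_artanh_of_norm_deriv_le (φ := fun t : ℝ => f (t • q)) (norm_nonneg q) hq
    (by simpa using h0) (fun t ht => hasDerivAt_comp_smul_of_hasSum hf hf' (hball t ht)) hφ'
  rwa [one_smul, Real.artanh_eq_half_log ⟨by linarith [norm_nonneg q], hq.le⟩] at this
end

section
/- Let F be holomorphic on a neighborhood of the closed disc D̄(a, r) ⊂ ℂ and suppose |F′(z)| ≤ 2|F′(a)| for all z ∈ D̄(a, r). Then for all z ∈ D̄(a, r): |F(z) − F(a)| ≥ |z − a|·(1 − |z − a|/(r − |z − a|))·|F′(a)| whenever |z − a| < r. In particular, |F(z) − F(a)| ≥ (3 − 2√2)·r·|F′(a)| for all z with |z − a| = (1 − √2/2)·r. -/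
/-! By Cauchy's formula on `∂D(a, r)`,
`F'(w) - F'(a) = (w - a) / (2πi) ∮ F'(ζ) / ((ζ - w) (ζ - a)) dζ`, so `|F'| ≤ 2 |F'(a)|` on the
circle gives `|F'(w) - F'(a)| ≤ 2 |F'(a)| |w - a| / (r - |w - a|)`. Integrating this along `[a, z]`
bounds `|F(z) - F(a) - (z - a) F'(a)|` by `|F'(a)| |z - a|² / (r - |z - a|)`, and the triangle
inequality gives the lower bound. The radius `(1 - √2/2) r` maximizes `x (1 - x / (r - x))`
on `[0, r)`. -/

open Metric Real Complex Set

variable {E : Type*} [NormedAddCommGroup E] [NormedSpace ℂ E]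

theorem DiffContOnCl.norm_sub_le_of_forall_mem_sphere_norm_le [CompleteSpace E] {G : ℂ → E}
    {a w : ℂ} {r C : ℝ} (hG : DiffContOnCl ℂ G (ball a r)) (hC : ∀ ζ ∈ sphere a r, ‖G ζ‖ ≤ C)
    (hw : w ∈ ball a r) :
    ‖G w - G a‖ ≤ C * ‖w - a‖ / (r - ‖w - a‖) := by
  have hr : 0 < r := pos_of_mem_ball hw
  have hwr : 0 < r - ‖w - a‖ := sub_pos.mpr (mem_ball_iff_norm.mp hw)
  have hne : ∀ c ∈ ball a r, ∀ ζ ∈ sphere a r, ζ - c ≠ 0 := fun c hc ζ hζ =>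
    sub_ne_zero.mpr (sphere_disjoint_ball.ne_of_mem hζ hc)
  have hGc : ContinuousOn G (sphere a r) := hG.continuousOn_ball.mono sphere_subset_closedBall
  have hint : ∀ c ∈ ball a r, CircleIntegrable (fun ζ => (ζ - c)⁻¹ • G ζ) a r := fun c hc =>
    (((continuousOn_id.sub continuousOn_const).inv₀ (hne c hc)).smul hGc).circleIntegrable hr.le
  have hcauchy : (∮ ζ in C(a, r), ((ζ - w)⁻¹ - (ζ - a)⁻¹) • G ζ)
      = (2 * π * I : ℂ) • (G w - G a) := by
    simp_rw [sub_smul]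
    rw [circleIntegral.integral_sub (hint w hw) (hint a (mem_ball_self hr)),
      hG.circleIntegral_sub_inv_smul hw, hG.circleIntegral_sub_inv_smul (mem_ball_self hr),
      smul_sub]
  have hkernel : ∀ ζ ∈ sphere a r,
      ‖((ζ - w)⁻¹ - (ζ - a)⁻¹) • G ζ‖ ≤ ‖w - a‖ / ((r - ‖w - a‖) * r) * C := by
    intro ζ hζ
    have hζw := hne w hw ζ hζ
    have hζa := hne a (mem_ball_self hr) ζ hζ
    have hζr : ‖ζ - a‖ = r := mem_sphere_iff_norm.mp hζ
    have hdist : r - ‖w - a‖ ≤ ‖ζ - w‖ := by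
      simpa [hζr] using norm_sub_norm_le (ζ - a) (w - a)
    have hsub : (ζ - w)⁻¹ - (ζ - a)⁻¹ = (w - a) / ((ζ - w) * (ζ - a)) := by
      field_simp; ring
    rw [norm_smul, hsub, norm_div, norm_mul, hζr]
    gcongr
    exact hC ζ hζ
  have hest := circleIntegral.norm_integral_le_of_norm_le_const hr.le hkernel
  rw [hcauchy, norm_smul] at hest
  have h2pi : ‖(2 * π * I : ℂ)‖ = 2 * π := by simp [pi_pos.le]
  rw [h2pi] at hest
  calc ‖G w - G a‖ = (2 * π * ‖G w - G a‖) / (2 * π) := by field_simp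
    _ ≤ 2 * π * r * (‖w - a‖ / ((r - ‖w - a‖) * r) * C) / (2 * π) := by gcongr
    _ = C * ‖w - a‖ / (r - ‖w - a‖) := by field_simp

theorem norm_sub_sub_smul_le_of_norm_sub_le {F F' : ℂ → E} {a z : ℂ} {K : ℝ}
    (hF : ∀ ξ ∈ segment ℝ a z, HasDerivAt F (F' ξ) ξ)
    (hK : ∀ ξ ∈ segment ℝ a z, ‖F' ξ - F' a‖ ≤ K * ‖ξ - a‖) :
    ‖F z - F a - (z - a) • F' a‖ ≤ K / 2 * ‖z - a‖ ^ 2 := by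
  let γ : ℝ → ℂ := AffineMap.lineMap a z
  have hγ : ∀ t ∈ Icc (0 : ℝ) 1, γ t ∈ segment ℝ a z := fun t ht => lineMap_mem_segment ℝ a z ht
  have hderiv : ∀ t ∈ Icc (0 : ℝ) 1, HasDerivAt (fun s => F (γ s) - F a - (γ s - a) • F' a)
      ((z - a) • F' (γ t) - (z - a) • F' a) t := fun t ht =>
    (((hF _ (hγ t ht)).scomp t AffineMap.hasDerivAt_lineMap).sub_const (F a)).sub
      ((AffineMap.hasDerivAt_lineMap.sub_const a).smul_const (F' a))
  have hbound : ∀ t ∈ Ico (0 : ℝ) 1,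
      ‖(z - a) • F' (γ t) - (z - a) • F' a‖ ≤ K * ‖z - a‖ ^ 2 * t := by
    intro t ht
    have hγa : ‖γ t - a‖ = t * ‖z - a‖ := by
      rw [← dist_eq_norm, dist_lineMap_left, Real.norm_of_nonneg ht.1, dist_comm,
        dist_eq_norm]
    rw [← smul_sub, norm_smul]
    calc ‖z - a‖ * ‖F' (γ t) - F' a‖ ≤ ‖z - a‖ * (K * ‖γ t - a‖) :=
          mul_le_mul_of_nonneg_left (hK _ (hγ t (Ico_subset_Icc_self ht))) (norm_nonneg _)
      _ = K * ‖z - a‖ ^ 2 * t := by rw [hγa]; ring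
  have hB : ∀ t : ℝ, HasDerivAt (fun t => K / 2 * ‖z - a‖ ^ 2 * t ^ 2) (K * ‖z - a‖ ^ 2 * t) t :=
    fun t => ((hasDerivAt_pow 2 t).const_mul (K / 2 * ‖z - a‖ ^ 2)).congr_deriv (by simp; ring)
  have hfence := image_norm_le_of_norm_deriv_right_le_deriv_boundary
    (fun t ht => (hderiv t ht).continuousAt.continuousWithinAt)
    (fun t ht => (hderiv t (Ico_subset_Icc_self ht)).hasDerivWithinAt) (by simp [γ]) hB
    hbound (right_mem_Icc.mpr zero_le_one)
  simpa [γ] using hfence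

theorem norm_sub_sub_smul_deriv_le [CompleteSpace E] {F : ℂ → E} {U : Set ℂ} {a z : ℂ}
    {r C : ℝ} (hU : IsOpen U) (hsub : closedBall a r ⊆ U) (hF : DifferentiableOn ℂ F U)
    (hC : ∀ ζ ∈ sphere a r, ‖deriv F ζ‖ ≤ C) (hz : ‖z - a‖ < r) :
    ‖F z - F a - (z - a) • deriv F a‖ ≤ C / 2 * ‖z - a‖ ^ 2 / (r - ‖z - a‖) := by
  have hr : 0 < r := (norm_nonneg _).trans_lt hz
  have hC0 : 0 ≤ C := by
    obtain ⟨ζ, hζ⟩ := (NormedSpace.sphere_nonempty (x := a)).mpr hr.le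
    exact (norm_nonneg _).trans (hC ζ hζ)
  have hseg : segment ℝ a z ⊆ ball a r :=
    (convex_ball a r).segment_subset (mem_ball_self hr) (mem_ball_iff_norm.mpr hz)
  have hF' : DiffContOnCl ℂ (deriv F) (ball a r) := (hF.deriv hU).diffContOnCl_ball hsub
  have hrem := norm_sub_sub_smul_le_of_norm_sub_le (F' := deriv F) (K := C / (r - ‖z - a‖))
    (fun ξ hξ => (hF.differentiableAt
      (hU.mem_nhds (hsub (ball_subset_closedBall (hseg hξ))))).hasDerivAt)
    (fun ξ hξ => by
      have hξz : ‖ξ - a‖ ≤ ‖z - a‖ := norm_sub_le_of_mem_segment hξ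
      calc ‖deriv F ξ - deriv F a‖ ≤ C * ‖ξ - a‖ / (r - ‖ξ - a‖) :=
            hF'.norm_sub_le_of_forall_mem_sphere_norm_le hC (hseg hξ)
        _ ≤ C * ‖ξ - a‖ / (r - ‖z - a‖) := by gcongr
        _ = C / (r - ‖z - a‖) * ‖ξ - a‖ := by ring)
  calc _ ≤ C / (r - ‖z - a‖) / 2 * ‖z - a‖ ^ 2 := hrem
    _ = C / 2 * ‖z - a‖ ^ 2 / (r - ‖z - a‖) := by ring

theorem one_sub_sqrt_two_div_two_mul_one_sub_div (r : ℝ) :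
    (1 - √2 / 2) * r * (1 - (1 - √2 / 2) * r / (r - (1 - √2 / 2) * r)) = (3 - 2 * √2) * r := by
  rcases eq_or_ne r 0 with rfl | hr
  · simp
  have hsq : √2 ^ 2 = 2 := sq_sqrt zero_le_two
  rw [show r - (1 - √2 / 2) * r = √2 / 2 * r by ring]
  field_simp
  linear_combination 2 * hsq

theorem stmt_19 (a : ℂ) (r : ℝ) (hr : 0 < r) (F : ℂ → ℂ)
    (U : Set ℂ) (hU : IsOpen U) (hsub : closedBall a r ⊆ U)
    (hF : DifferentiableOn ℂ F U)
    (hder : ∀ z ∈ closedBall a r, ‖deriv F z‖ ≤ 2 * ‖deriv F a‖) :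
    (∀ z : ℂ, ‖z - a‖ < r →
      ‖z - a‖ * (1 - ‖z - a‖ / (r - ‖z - a‖)) * ‖deriv F a‖ ≤ ‖F z - F a‖) ∧
    (∀ z : ℂ, ‖z - a‖ = (1 - Real.sqrt 2 / 2) * r →
      (3 - 2 * Real.sqrt 2) * r * ‖deriv F a‖ ≤ ‖F z - F a‖) := by
  have hlower : ∀ z : ℂ, ‖z - a‖ < r →
      ‖z - a‖ * (1 - ‖z - a‖ / (r - ‖z - a‖)) * ‖deriv F a‖ ≤ ‖F z - F a‖ := by
    intro z hz
    have hrem := norm_sub_sub_smul_deriv_le hU hsub hF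
      (fun ζ hζ => hder ζ (sphere_subset_closedBall hζ)) hz
    have htri := norm_sub_le (F z - F a) (F z - F a - (z - a) • deriv F a)
    rw [sub_sub_cancel, norm_smul] at htri
    calc _ = ‖z - a‖ * ‖deriv F a‖ - 2 * ‖deriv F a‖ / 2 * ‖z - a‖ ^ 2 / (r - ‖z - a‖) := by
          field_simp
      _ ≤ ‖F z - F a‖ := by linarith
  refine ⟨hlower, fun z hz => ?_⟩
  have hzr : ‖z - a‖ < r := by rw [hz]; nlinarith [sqrt_pos.mpr (two_pos : (0 : ℝ) < 2)]
  simpa only [hz, one_sub_sqrt_two_div_two_mul_one_sub_div] using hlower z hzr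
end
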